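/- arXiv:math/0412289 — 9 statements merged into one kernel-verified Lean document; each statement's English description precedes it below -/
import Mathlib

section
/- Let a = (a₁, …, a_p) and b = (b₁, …, b_p) be integer sequences satisfying a₁ ≥ b₁ > a₂ ≥ b₂ > ⋯ > a_p ≥ b_p. Fix k with 0 ≤ k ≤ p and indices i₁ < i₂ < ⋯ < i_k and j₁ < j₂ < ⋯ < j_k in {1, …, p}. Let a′ be the sequence obtained from a by replacing the entry in position i_s by b_{j_s} for each s = 1, …, k, and let b′ be obtained from b by replacing the entry in position j_s by a_{i_s} for each s. If all entries of a′ are distinct and all entries of b′ are distinct, then inv(a′) = inv(b′), where inv(x) denotes the number of pairs of positions u < v with x_u > x_v. -/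
open scoped BigOperators

/-- `conj f j` is the number of indices `i` with `f i > j`, i.e. the length of the
`(j+1)`-st column of the Young diagram of `f` (0-indexed conjugate partition). -/
noncomputable def conj (f : ℕ → ℕ) (j : ℕ) : ℕ := Nat.card {i : ℕ | j < f i}

/-- `f` is a partition: weakly decreasing with finitely many nonzero parts
(0-indexed: the `(i+1)`-st part is `f i`). -/
def IsPartition (f : ℕ → ℕ) : Prop := Antitone f ∧ ∃ N, ∀ i, N ≤ i → f i = 0

/-- the number of nonzero parts of `f` -/
noncomputable def len (f : ℕ → ℕ) : ℕ := Nat.card {i : ℕ | f i ≠ 0}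

/-- the sum of the parts, `|f|` -/
noncomputable def wt (f : ℕ → ℕ) : ℕ := ∑ᶠ i, f i

/-- `R` is the weakly decreasing rearrangement of the (multiset of nonzero) values of `f`:
`R` is a partition and, for every threshold `t`, `R` has as many parts `> t` as `f` does. -/
def IsSortOf (R f : ℕ → ℕ) : Prop := IsPartition R ∧ ∀ t, conj R t = conj f t

/-- `γ = μ ∪ ν` : `γ` is the decreasing rearrangement of all the parts of `μ` and `ν`
together: for every threshold `t`, the number of parts of `γ` that are `> t` equals the
number of such parts of `μ` plus the number of such parts of `ν`. -/
def IsUnion (γ μ ν : ℕ → ℕ) : Prop := IsPartition γ ∧ ∀ t, conj γ t = conj μ t + conj ν t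

/-- `(l, r) = (μ, ν)~` : with `γ₁ ≥ γ₂ ≥ ⋯` the decreasing rearrangement of all the parts
of `μ` and `ν`, `l = (γ₁, γ₃, γ₅, …)` and `r = (γ₂, γ₄, γ₆, …)` (0-indexed below). -/
def IsTilde (μ ν l r : ℕ → ℕ) : Prop :=
  ∃ γ : ℕ → ℕ, IsUnion γ μ ν ∧ (∀ i, l i = γ (2 * i)) ∧ (∀ i, r i = γ (2 * i + 1))

/-- dominance order `θ ⪰ π`: every initial partial sum of `θ` is at least that of `π`. -/
def Dominates (θ π : ℕ → ℕ) : Prop :=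
  ∀ k, ∑ i ∈ Finset.range k, π i ≤ ∑ i ∈ Finset.range k, θ i

/-- the complete homogeneous symmetric polynomial `h_k` in `n` variables,
with the convention `h_k = 0` for `k < 0`. -/
noncomputable def hpoly (n : ℕ) (k : ℤ) : MvPolynomial (Fin n) ℤ :=
  if 0 ≤ k then MvPolynomial.hsymm (Fin n) ℤ k.toNat else 0

/-- the skew Schur polynomial `s_{μ/α}` in `n` variables, defined by the
Jacobi–Trudi determinant `det (h_{μ_i - α_j - i + j})`. -/
noncomputable def skewSchur (n : ℕ) (μ α : ℕ → ℕ) : MvPolynomial (Fin n) ℤ :=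
  Matrix.det (Matrix.of fun i j : Fin (len μ) =>
    hpoly n ((μ (i : ℕ) : ℤ) - (α (j : ℕ) : ℤ) - ((i : ℕ) : ℤ) + ((j : ℕ) : ℤ)))

/-- the Schur polynomial `s_μ` in `n` variables. -/
noncomputable def schur (n : ℕ) (μ : ℕ → ℕ) : MvPolynomial (Fin n) ℤ :=
  skewSchur n μ (fun _ => 0)

/-- A symmetric function, given as the compatible family of its truncations to `n`
variables for every `n`, is Schur-positive if it is a linear combination of Schur
functions with nonnegative integer coefficients. -/
def SchurPositive (F : ∀ n : ℕ, MvPolynomial (Fin n) ℤ) : Prop :=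
  ∃ c : (ℕ → ℕ) → ℕ, (Function.support c).Finite ∧
    (∀ θ, c θ ≠ 0 → IsPartition θ) ∧
    ∀ n, F n = ∑ᶠ θ : ℕ → ℕ, (c θ : ℤ) • schur n θ

/-- `c` is the family of coefficients in the Schur expansion of `s_μ s_ν`,
i.e. the Littlewood–Richardson coefficients `c θ = c^θ_{μν}`. -/
def IsSchurExpansionOfProduct (μ ν : ℕ → ℕ) (c : (ℕ → ℕ) → ℤ) : Prop :=
  (Function.support c).Finite ∧ (∀ θ, c θ ≠ 0 → IsPartition θ) ∧
    ∀ n, schur n μ * schur n ν = ∑ᶠ θ : ℕ → ℕ, c θ • schur n θ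

/-- `c` is the family of coefficients in the Schur expansion of `s_{μ/α} s_{ν/β}`. -/
def IsSchurExpansionOfSkewProduct (μ α ν β : ℕ → ℕ) (c : (ℕ → ℕ) → ℤ) : Prop :=
  (Function.support c).Finite ∧ (∀ θ, c θ ≠ 0 → IsPartition θ) ∧
    ∀ n, skewSchur n μ α * skewSchur n ν β = ∑ᶠ θ : ℕ → ℕ, c θ • schur n θ

/-- a hook partition `(j, 1^k)`, `j ≥ 1`: nonempty, and all parts after the first are ≤ 1. -/
def IsHook (f : ℕ → ℕ) : Prop := IsPartition f ∧ 1 ≤ f 0 ∧ ∀ i, 1 ≤ i → f i ≤ 1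

/-- the number of inversions of the length-`p` integer sequence `x 0, x 1, …, x (p-1)`:
pairs of positions `u < v` with `x u > x v`. -/
def inversions (p : ℕ) (x : ℕ → ℤ) : ℕ :=
  ((Finset.range p ×ˢ Finset.range p).filter (fun q => q.1 < q.2 ∧ x q.2 < x q.1)).card

private lemma sum_point' {p : ℕ} (c : ℕ) (hc : c < p) (Q : ℕ → Prop)
    [DecidablePred Q] [∀ u, Decidable (c = u ∧ Q u)] :
    (∑ u ∈ Finset.range p, if c = u ∧ Q u then (1:ℕ) else 0) = if Q c then 1 else 0 := by
  rw [Finset.sum_eq_single_of_mem c (Finset.mem_range.mpr hc)]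
  · simp
  · intro b _ hb
    rw [if_neg]; rintro ⟨h, -⟩; exact hb h.symm

private lemma fill' (p k : ℕ) (I : ℕ → ℕ)
    (hIlt : ∀ s, s < k → I s < p)
    (hIinj : ∀ s t, s < k → t < k → I s = I t → s = t)
    (c : ℕ → Prop) [DecidablePred c] [∀ v, Decidable ((∀ t, t < k → I t ≠ v) ∧ c v)] :
    (∑ v ∈ Finset.range p, if (∀ t, t < k → I t ≠ v) ∧ c v then (1:ℕ) else 0)
      + (∑ t ∈ Finset.range k, if c (I t) then (1:ℕ) else 0)
      = ∑ v ∈ Finset.range p, if c v then (1:ℕ) else 0 := by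
  have e1 : (∑ t ∈ Finset.range k, if c (I t) then (1:ℕ) else 0)
      = ∑ t ∈ Finset.range k, ∑ v ∈ Finset.range p, if I t = v ∧ c v then (1:ℕ) else 0 := by
    refine Finset.sum_congr rfl fun t ht => ?_
    rw [sum_point' (I t) (hIlt t (Finset.mem_range.mp ht)) c]
  rw [e1, Finset.sum_comm, ← Finset.sum_add_distrib]
  refine Finset.sum_congr rfl fun v hv => ?_
  by_cases h : ∃ t, t < k ∧ I t = v
  · obtain ⟨t₀, ht₀, hIt₀⟩ := h
    have hfirst : (if (∀ t, t < k → I t ≠ v) ∧ c v then (1:ℕ) else 0) = 0 := by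
      rw [if_neg]; rintro ⟨hn, -⟩; exact hn t₀ ht₀ hIt₀
    have hsum : (∑ t ∈ Finset.range k, if I t = v ∧ c v then (1:ℕ) else 0)
        = if c v then 1 else 0 := by
      rw [Finset.sum_eq_single_of_mem t₀ (Finset.mem_range.mpr ht₀)]
      · simp [hIt₀]
      · intro t ht hne
        rw [if_neg]
        rintro ⟨hIt, -⟩
        exact hne (hIinj t t₀ (Finset.mem_range.mp ht) ht₀ (hIt.trans hIt₀.symm))
    rw [hfirst, hsum, zero_add]
  · push_neg at h
    have hsum : (∑ t ∈ Finset.range k, if I t = v ∧ c v then (1:ℕ) else 0) = 0 := by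
      refine Finset.sum_eq_zero fun t ht => ?_
      rw [if_neg]; rintro ⟨hIt, -⟩
      exact (h t (Finset.mem_range.mp ht)) hIt
    rw [hsum, add_zero, if_congr (and_iff_right h) rfl rfl]

private lemma asc_count (p k : ℕ) (x : ℕ → ℤ) (I : ℕ → ℕ) (R : ℕ → ℕ → Prop)
    [∀ s v, Decidable (R s v)]
    (hIlt : ∀ s, s < k → I s < p)
    (hImono : ∀ s t, s < t → t < k → I s < I t)
    (hchar : ∀ u v, u < p → v < p → u < v →
      ((x u < x v) ↔ (∃ s, s < k ∧ I s = u ∧ (∀ t, t < k → I t ≠ v) ∧ R s v) ∨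
        (∃ s, s < k ∧ I s = v ∧ (∀ t, t < k → I t ≠ u) ∧ ¬ R s u))) :
    (∑ u ∈ Finset.range p, ∑ v ∈ Finset.range p, if u < v ∧ x u < x v then (1:ℕ) else 0)
      + ∑ s ∈ Finset.range k, ∑ t ∈ Finset.range k,
          ((if I s < I t ∧ R s (I t) then (1:ℕ) else 0) +
           (if I t < I s ∧ ¬ R s (I t) then (1:ℕ) else 0))
      = ∑ s ∈ Finset.range k, ∑ v ∈ Finset.range p,
          ((if I s < v ∧ R s v then (1:ℕ) else 0) +
           (if v < I s ∧ ¬ R s v then (1:ℕ) else 0)) := by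
  classical
  have hIinj : ∀ s t, s < k → t < k → I s = I t → s = t := by
    intro s t hs ht h
    rcases Nat.lt_trichotomy s t with h' | h' | h'
    · exact absurd h (Nat.ne_of_lt (hImono s t h' ht))
    · exact h'
    · exact absurd h.symm (Nat.ne_of_lt (hImono t s h' hs))
  -- Step A : pointwise characterization as a sum over s
  have L1 : ∀ u ∈ Finset.range p, ∀ v ∈ Finset.range p,
      (if u < v ∧ x u < x v then (1:ℕ) else 0)
        = ∑ s ∈ Finset.range k,
            ((if I s = u ∧ (∀ t, t < k → I t ≠ v) ∧ u < v ∧ R s v then (1:ℕ) else 0) +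
             (if I s = v ∧ (∀ t, t < k → I t ≠ u) ∧ u < v ∧ ¬ R s u then (1:ℕ) else 0)) := by
    intro u hu v hv
    rw [Finset.mem_range] at hu hv
    by_cases huv : u < v
    · by_cases hEu : ∃ s, s < k ∧ I s = u
      · obtain ⟨s₀, hs₀, hIs₀⟩ := hEu
        by_cases hEv : ∃ t, t < k ∧ I t = v
        · obtain ⟨t₀, ht₀, hIt₀⟩ := hEv
          have hlhs : ¬ (x u < x v) := by
            rw [hchar u v hu hv huv]
            rintro (⟨s, hs, hIs, hn, -⟩ | ⟨s, hs, hIs, hn, -⟩)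
            · exact hn t₀ ht₀ hIt₀
            · exact hn s₀ hs₀ hIs₀
          rw [if_neg (fun h => hlhs h.2)]
          refine (Finset.sum_eq_zero fun s _ => ?_).symm
          rw [if_neg, if_neg, add_zero]
          · rintro ⟨-, hn, -, -⟩; exact hn s₀ hs₀ hIs₀
          · rintro ⟨-, hn, -, -⟩; exact hn t₀ ht₀ hIt₀
        · push_neg at hEv
          have hiff : (u < v ∧ x u < x v) ↔ R s₀ v := by
            constructor
            · rintro ⟨-, hlt⟩
              rcases (hchar u v hu hv huv).mp hlt with ⟨s, hs, hIs, -, hR⟩ | ⟨s, hs, hIs, -, -⟩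
              · rwa [hIinj s₀ s hs₀ hs (hIs₀.trans hIs.symm)]
              · exact absurd hIs (hEv s hs)
            · intro hR
              exact ⟨huv, (hchar u v hu hv huv).mpr (Or.inl ⟨s₀, hs₀, hIs₀, hEv, hR⟩)⟩
          rw [Finset.sum_eq_single_of_mem s₀ (Finset.mem_range.mpr hs₀)]
          · have h2 : (if I s₀ = v ∧ (∀ t, t < k → I t ≠ u) ∧ u < v ∧ ¬ R s₀ u then (1:ℕ) else 0) = 0 :=
              if_neg (fun h => hEv s₀ hs₀ h.1)
            rw [h2, add_zero]
            exact if_congr (hiff.trans ⟨fun hR => ⟨hIs₀, hEv, huv, hR⟩, fun h => h.2.2.2⟩) rfl rfl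
          · intro s hs hne
            rw [if_neg, if_neg, add_zero]
            · rintro ⟨hIs, -, -, -⟩; exact hEv s (Finset.mem_range.mp hs) hIs
            · rintro ⟨hIs, -, -, -⟩
              exact hne (hIinj s s₀ (Finset.mem_range.mp hs) hs₀ (hIs.trans hIs₀.symm))
      · push_neg at hEu
        by_cases hEv : ∃ t, t < k ∧ I t = v
        · obtain ⟨t₀, ht₀, hIt₀⟩ := hEv
          have hiff : (u < v ∧ x u < x v) ↔ ¬ R t₀ u := by
            constructor
            · rintro ⟨-, hlt⟩
              rcases (hchar u v hu hv huv).mp hlt with ⟨s, hs, hIs, -, -⟩ | ⟨s, hs, hIs, -, hR⟩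
              · exact absurd hIs (hEu s hs)
              · rwa [hIinj t₀ s ht₀ hs (hIt₀.trans hIs.symm)]
            · intro hR
              exact ⟨huv, (hchar u v hu hv huv).mpr (Or.inr ⟨t₀, ht₀, hIt₀, hEu, hR⟩)⟩
          rw [Finset.sum_eq_single_of_mem t₀ (Finset.mem_range.mpr ht₀)]
          · have h2 : (if I t₀ = u ∧ (∀ t, t < k → I t ≠ v) ∧ u < v ∧ R t₀ v then (1:ℕ) else 0) = 0 :=
              if_neg (fun h => hEu t₀ ht₀ h.1)
            rw [h2, zero_add]
            exact if_congr (hiff.trans ⟨fun hR => ⟨hIt₀, hEu, huv, hR⟩, fun h => h.2.2.2⟩) rfl rfl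
          · intro s hs hne
            rw [if_neg, if_neg, add_zero]
            · rintro ⟨hIs, -, -, -⟩
              exact hne (hIinj s t₀ (Finset.mem_range.mp hs) ht₀ (hIs.trans hIt₀.symm))
            · rintro ⟨hIs, -, -, -⟩; exact hEu s (Finset.mem_range.mp hs) hIs
        · push_neg at hEv
          have hlhs : ¬ (x u < x v) := by
            rw [hchar u v hu hv huv]
            rintro (⟨s, hs, hIs, -, -⟩ | ⟨s, hs, hIs, -, -⟩)
            · exact hEu s hs hIs
            · exact hEv s hs hIs
          rw [if_neg (fun h => hlhs h.2)]
          refine (Finset.sum_eq_zero fun s hs => ?_).symm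
          rw [if_neg, if_neg, add_zero]
          · rintro ⟨hIs, -, -, -⟩; exact hEv s (Finset.mem_range.mp hs) hIs
          · rintro ⟨hIs, -, -, -⟩; exact hEu s (Finset.mem_range.mp hs) hIs
    · rw [if_neg (fun h => huv h.1)]
      refine (Finset.sum_eq_zero fun s _ => ?_).symm
      rw [if_neg (fun h => huv h.2.2.1), if_neg (fun h => huv h.2.2.1), add_zero]
  -- Step B: reorganize the triple sum
  have hA : (∑ u ∈ Finset.range p, ∑ v ∈ Finset.range p, if u < v ∧ x u < x v then (1:ℕ) else 0)
      = ∑ s ∈ Finset.range k, ∑ u ∈ Finset.range p, ∑ v ∈ Finset.range p,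
          ((if I s = u ∧ (∀ t, t < k → I t ≠ v) ∧ u < v ∧ R s v then (1:ℕ) else 0) +
           (if I s = v ∧ (∀ t, t < k → I t ≠ u) ∧ u < v ∧ ¬ R s u then (1:ℕ) else 0)) := by
    rw [Finset.sum_congr rfl fun u hu => Finset.sum_congr rfl fun v hv => L1 u hu v hv]
    rw [Finset.sum_congr rfl fun u (_ : u ∈ Finset.range p) => Finset.sum_comm]
    exact Finset.sum_comm
  -- Step C: evaluate the inner double sum for each s
  have hinner : ∀ s ∈ Finset.range k,
      (∑ u ∈ Finset.range p, ∑ v ∈ Finset.range p,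
          ((if I s = u ∧ (∀ t, t < k → I t ≠ v) ∧ u < v ∧ R s v then (1:ℕ) else 0) +
           (if I s = v ∧ (∀ t, t < k → I t ≠ u) ∧ u < v ∧ ¬ R s u then (1:ℕ) else 0)))
        = (∑ v ∈ Finset.range p, if (∀ t, t < k → I t ≠ v) ∧ I s < v ∧ R s v then (1:ℕ) else 0)
          + (∑ u ∈ Finset.range p, if (∀ t, t < k → I t ≠ u) ∧ u < I s ∧ ¬ R s u then (1:ℕ) else 0) := by
    intro s hs
    have hsp : I s < p := hIlt s (Finset.mem_range.mp hs)
    have p1 : (∑ u ∈ Finset.range p, ∑ v ∈ Finset.range p,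
        (if I s = u ∧ (∀ t, t < k → I t ≠ v) ∧ u < v ∧ R s v then (1:ℕ) else 0))
        = ∑ v ∈ Finset.range p, if (∀ t, t < k → I t ≠ v) ∧ I s < v ∧ R s v then (1:ℕ) else 0 := by
      rw [Finset.sum_comm]
      exact Finset.sum_congr rfl fun v _ =>
        sum_point' (I s) hsp (fun u => (∀ t, t < k → I t ≠ v) ∧ u < v ∧ R s v)
    have p2 : (∑ u ∈ Finset.range p, ∑ v ∈ Finset.range p,
        (if I s = v ∧ (∀ t, t < k → I t ≠ u) ∧ u < v ∧ ¬ R s u then (1:ℕ) else 0))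
        = ∑ u ∈ Finset.range p, if (∀ t, t < k → I t ≠ u) ∧ u < I s ∧ ¬ R s u then (1:ℕ) else 0 :=
      Finset.sum_congr rfl fun u _ =>
        sum_point' (I s) hsp (fun v => (∀ t, t < k → I t ≠ u) ∧ u < v ∧ ¬ R s u)
    calc (∑ u ∈ Finset.range p, ∑ v ∈ Finset.range p,
          ((if I s = u ∧ (∀ t, t < k → I t ≠ v) ∧ u < v ∧ R s v then (1:ℕ) else 0) +
           (if I s = v ∧ (∀ t, t < k → I t ≠ u) ∧ u < v ∧ ¬ R s u then (1:ℕ) else 0)))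
        = (∑ u ∈ Finset.range p, ∑ v ∈ Finset.range p,
            (if I s = u ∧ (∀ t, t < k → I t ≠ v) ∧ u < v ∧ R s v then (1:ℕ) else 0))
          + (∑ u ∈ Finset.range p, ∑ v ∈ Finset.range p,
            (if I s = v ∧ (∀ t, t < k → I t ≠ u) ∧ u < v ∧ ¬ R s u then (1:ℕ) else 0)) := by
          rw [← Finset.sum_add_distrib]
          exact Finset.sum_congr rfl fun u _ => Finset.sum_add_distrib
      _ = _ := by rw [p1, p2]
  -- Final assembly
  rw [hA, ← Finset.sum_add_distrib]
  refine Finset.sum_congr rfl fun s hs => ?_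
  rw [hinner s hs, Finset.sum_add_distrib, Finset.sum_add_distrib]
  have e1 : (∑ v ∈ Finset.range p, if (∀ t, t < k → I t ≠ v) ∧ I s < v ∧ R s v then (1:ℕ) else 0)
      + (∑ t ∈ Finset.range k, if I s < I t ∧ R s (I t) then (1:ℕ) else 0)
      = ∑ v ∈ Finset.range p, if I s < v ∧ R s v then (1:ℕ) else 0 :=
    fill' p k I hIlt hIinj (fun v => I s < v ∧ R s v)
  have e2 : (∑ u ∈ Finset.range p, if (∀ t, t < k → I t ≠ u) ∧ u < I s ∧ ¬ R s u then (1:ℕ) else 0)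
      + (∑ t ∈ Finset.range k, if I t < I s ∧ ¬ R s (I t) then (1:ℕ) else 0)
      = ∑ v ∈ Finset.range p, if v < I s ∧ ¬ R s v then (1:ℕ) else 0 :=
    fill' p k I hIlt hIinj (fun v => v < I s ∧ ¬ R s v)
  omega


private lemma ioc_ico' (p i j : ℕ) (hj : j < p) :
    (∑ v ∈ Finset.range p, if i < v ∧ v ≤ j then (1:ℕ) else 0)
      = ∑ v ∈ Finset.range p, if i ≤ v ∧ v < j then (1:ℕ) else 0 := by
  rw [← Finset.card_filter, ← Finset.card_filter]
  have h1 : (Finset.range p).filter (fun v => i < v ∧ v ≤ j) = Finset.Ioc i j := by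
    ext v; simp only [Finset.mem_filter, Finset.mem_range, Finset.mem_Ioc]; omega
  have h2 : (Finset.range p).filter (fun v => i ≤ v ∧ v < j) = Finset.Ico i j := by
    ext v; simp only [Finset.mem_filter, Finset.mem_range, Finset.mem_Ico]; omega
  rw [h1, h2, Nat.card_Ioc, Nat.card_Ico]

private lemma mono_a (p : ℕ) (a b : ℕ → ℤ) (hab : ∀ i, i < p → b i ≤ a i)
    (hba : ∀ i, i + 1 < p → a (i + 1) < b i) :
    ∀ y, y < p → ∀ x, x ≤ y → a y ≤ a x := by
  intro y
  induction y with
  | zero => intro _ x hx; rw [Nat.le_zero.mp hx]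
  | succ n ih =>
    intro hy x hx
    rcases Nat.eq_or_lt_of_le hx with h | h
    · rw [h]
    · have h1 : a (n + 1) < b n := hba n hy
      have h2 : b n ≤ a n := hab n (by omega)
      have h3 : a n ≤ a x := ih (by omega) x (by omega)
      omega

private lemma mono_b (p : ℕ) (a b : ℕ → ℤ) (hab : ∀ i, i < p → b i ≤ a i)
    (hba : ∀ i, i + 1 < p → a (i + 1) < b i) :
    ∀ y, y < p → ∀ x, x ≤ y → b y ≤ b x := by
  intro y
  induction y with
  | zero => intro _ x hx; rw [Nat.le_zero.mp hx]
  | succ n ih =>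
    intro hy x hx
    rcases Nat.eq_or_lt_of_le hx with h | h
    · rw [h]
    · have h1 : b (n + 1) ≤ a (n + 1) := hab (n + 1) hy
      have h2 : a (n + 1) < b n := hba n hy
      have h3 : b n ≤ b x := ih (by omega) x (by omega)
      omega

private lemma fg_swap (k : ℕ) (I J : ℕ → ℕ)
    (hI : ∀ s t, s < t → t < k → I s < I t)
    (hJ : ∀ s t, s < t → t < k → J s < J t) :
    (∑ s ∈ Finset.range k, ∑ t ∈ Finset.range k,
        ((if I s < I t ∧ I t ≤ J s then (1:ℕ) else 0) +
         (if I t < I s ∧ ¬ (I t ≤ J s) then (1:ℕ) else 0)))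
      = ∑ s ∈ Finset.range k, ∑ t ∈ Finset.range k,
        ((if J s < J t ∧ J t < I s then (1:ℕ) else 0) +
         (if J t < J s ∧ ¬ (J t < I s) then (1:ℕ) else 0)) := by
  have key : ∀ s ∈ Finset.range k, ∀ t ∈ Finset.range k,
      (((if I s < I t ∧ I t ≤ J s then (1:ℕ) else 0) +
        (if I t < I s ∧ ¬ (I t ≤ J s) then (1:ℕ) else 0)) +
       ((if I t < I s ∧ I s ≤ J t then (1:ℕ) else 0) +
        (if I s < I t ∧ ¬ (I s ≤ J t) then (1:ℕ) else 0)))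
      = (((if J s < J t ∧ J t < I s then (1:ℕ) else 0) +
          (if J t < J s ∧ ¬ (J t < I s) then (1:ℕ) else 0)) +
         ((if J t < J s ∧ J s < I t then (1:ℕ) else 0) +
          (if J s < J t ∧ ¬ (J s < I t) then (1:ℕ) else 0))) := by
    intro s hs t ht
    rw [Finset.mem_range] at hs ht
    rcases Nat.lt_trichotomy s t with h | h | h
    · have h1 := hI s t h ht
      have h2 := hJ s t h ht
      split_ifs <;> omega
    · subst h
      split_ifs <;> omega
    · have h1 := hI t s h hs
      have h2 := hJ t s h hs
      split_ifs <;> omega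
  have hsum : (∑ s ∈ Finset.range k, ∑ t ∈ Finset.range k,
      (((if I s < I t ∧ I t ≤ J s then (1:ℕ) else 0) +
        (if I t < I s ∧ ¬ (I t ≤ J s) then (1:ℕ) else 0)) +
       ((if I t < I s ∧ I s ≤ J t then (1:ℕ) else 0) +
        (if I s < I t ∧ ¬ (I s ≤ J t) then (1:ℕ) else 0))))
      = ∑ s ∈ Finset.range k, ∑ t ∈ Finset.range k,
      (((if J s < J t ∧ J t < I s then (1:ℕ) else 0) +
        (if J t < J s ∧ ¬ (J t < I s) then (1:ℕ) else 0)) +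
       ((if J t < J s ∧ J s < I t then (1:ℕ) else 0) +
        (if J s < J t ∧ ¬ (J s < I t) then (1:ℕ) else 0))) :=
    Finset.sum_congr rfl fun s hs => Finset.sum_congr rfl fun t ht => key s hs t ht
  have combF : (∑ s ∈ Finset.range k, ∑ t ∈ Finset.range k,
      (((if I s < I t ∧ I t ≤ J s then (1:ℕ) else 0) +
        (if I t < I s ∧ ¬ (I t ≤ J s) then (1:ℕ) else 0)) +
       ((if I t < I s ∧ I s ≤ J t then (1:ℕ) else 0) +
        (if I s < I t ∧ ¬ (I s ≤ J t) then (1:ℕ) else 0))))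
      = (∑ s ∈ Finset.range k, ∑ t ∈ Finset.range k,
          ((if I s < I t ∧ I t ≤ J s then (1:ℕ) else 0) +
           (if I t < I s ∧ ¬ (I t ≤ J s) then (1:ℕ) else 0)))
        + (∑ s ∈ Finset.range k, ∑ t ∈ Finset.range k,
          ((if I t < I s ∧ I s ≤ J t then (1:ℕ) else 0) +
           (if I s < I t ∧ ¬ (I s ≤ J t) then (1:ℕ) else 0))) := by
    rw [← Finset.sum_add_distrib]
    exact Finset.sum_congr rfl fun s _ => Finset.sum_add_distrib
  have combG : (∑ s ∈ Finset.range k, ∑ t ∈ Finset.range k,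
      (((if J s < J t ∧ J t < I s then (1:ℕ) else 0) +
        (if J t < J s ∧ ¬ (J t < I s) then (1:ℕ) else 0)) +
       ((if J t < J s ∧ J s < I t then (1:ℕ) else 0) +
        (if J s < J t ∧ ¬ (J s < I t) then (1:ℕ) else 0))))
      = (∑ s ∈ Finset.range k, ∑ t ∈ Finset.range k,
          ((if J s < J t ∧ J t < I s then (1:ℕ) else 0) +
           (if J t < J s ∧ ¬ (J t < I s) then (1:ℕ) else 0)))
        + (∑ s ∈ Finset.range k, ∑ t ∈ Finset.range k,
          ((if J t < J s ∧ J s < I t then (1:ℕ) else 0) +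
           (if J s < J t ∧ ¬ (J s < I t) then (1:ℕ) else 0))) := by
    rw [← Finset.sum_add_distrib]
    exact Finset.sum_congr rfl fun s _ => Finset.sum_add_distrib
  have hFswap : (∑ s ∈ Finset.range k, ∑ t ∈ Finset.range k,
      ((if I t < I s ∧ I s ≤ J t then (1:ℕ) else 0) +
       (if I s < I t ∧ ¬ (I s ≤ J t) then (1:ℕ) else 0)))
      = ∑ s ∈ Finset.range k, ∑ t ∈ Finset.range k,
      ((if I s < I t ∧ I t ≤ J s then (1:ℕ) else 0) +
       (if I t < I s ∧ ¬ (I t ≤ J s) then (1:ℕ) else 0)) := Finset.sum_comm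
  have hGswap : (∑ s ∈ Finset.range k, ∑ t ∈ Finset.range k,
      ((if J t < J s ∧ J s < I t then (1:ℕ) else 0) +
       (if J s < J t ∧ ¬ (J s < I t) then (1:ℕ) else 0)))
      = ∑ s ∈ Finset.range k, ∑ t ∈ Finset.range k,
      ((if J s < J t ∧ J t < I s then (1:ℕ) else 0) +
       (if J t < J s ∧ ¬ (J t < I s) then (1:ℕ) else 0)) := Finset.sum_comm
  omega

private lemma inv_add_asc (p : ℕ) (x : ℕ → ℤ)
    (hdist : ∀ u v, u < p → v < p → x u = x v → u = v) :
    inversions p x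
      + (∑ u ∈ Finset.range p, ∑ v ∈ Finset.range p, if u < v ∧ x u < x v then (1:ℕ) else 0)
      = ∑ u ∈ Finset.range p, ∑ v ∈ Finset.range p, if u < v then (1:ℕ) else 0 := by
  have h1 : inversions p x
      = ∑ u ∈ Finset.range p, ∑ v ∈ Finset.range p, if u < v ∧ x v < x u then (1:ℕ) else 0 := by
    rw [inversions, Finset.card_filter, Finset.sum_product]
  rw [h1, ← Finset.sum_add_distrib]
  refine Finset.sum_congr rfl fun u hu => ?_
  rw [← Finset.sum_add_distrib]
  refine Finset.sum_congr rfl fun v hv => ?_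
  by_cases huv : u < v
  · have hne : x u ≠ x v := fun h =>
      absurd (hdist u v (Finset.mem_range.mp hu) (Finset.mem_range.mp hv) h) (Nat.ne_of_lt huv)
    simp only [huv, true_and, if_true]
    rcases lt_trichotomy (x u) (x v) with h | h | h
    · rw [if_neg (asymm h), if_pos h]
    · exact absurd h hne
    · rw [if_pos h, if_neg (asymm h)]
  · simp only [huv, false_and, if_false]


/-- Lemma 5: given interleaved sequences
`a₁ ≥ b₁ > a₂ ≥ b₂ > ⋯ > a_p ≥ b_p` (0-indexed below), exchanging the entries of `a` in
positions `I 0 < ⋯ < I (k-1)` with the entries of `b` in positions `J 0 < ⋯ < J (k-1)`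
yields sequences `a'` and `b'`; if the entries of `a'` are distinct and the entries of
`b'` are distinct, then `inv a' = inv b'`. -/
theorem stmt2 (p k : ℕ) (hk : k ≤ p) (a b a' b' : ℕ → ℤ)
    (hab : ∀ i, i < p → b i ≤ a i)
    (hba : ∀ i, i + 1 < p → a (i + 1) < b i)
    (I J : ℕ → ℕ)
    (hIlt : ∀ s, s < k → I s < p) (hJlt : ∀ s, s < k → J s < p)
    (hImono : ∀ s t, s < t → t < k → I s < I t)
    (hJmono : ∀ s t, s < t → t < k → J s < J t)
    (ha'swap : ∀ s, s < k → a' (I s) = b (J s))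
    (ha'fix : ∀ u, u < p → (∀ s, s < k → I s ≠ u) → a' u = a u)
    (hb'swap : ∀ s, s < k → b' (J s) = a (I s))
    (hb'fix : ∀ u, u < p → (∀ s, s < k → J s ≠ u) → b' u = b u)
    (hdista : ∀ u v, u < p → v < p → a' u = a' v → u = v)
    (hdistb : ∀ u v, u < p → v < p → b' u = b' v → u = v) :
    inversions p a' = inversions p b' := by
  classical
  have haa := mono_a p a b hab hba
  have hbb := mono_b p a b hab hba
  have C1 : ∀ j u, j < u → u < p → a u < b j := by
    intro j u hj hu
    have h1 : a u ≤ a (j + 1) := haa u hu (j + 1) (by omega)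
    have h2 : a (j + 1) < b j := hba j (by omega)
    omega
  have C2 : ∀ u j, u ≤ j → j < p → b j ≤ a u := by
    intro u j h hj
    have h1 : b j ≤ b u := hbb j hj u h
    have h2 : b u ≤ a u := hab u (by omega)
    omega
  -- characterization of ascents of a'
  have hcharA : ∀ u v, u < p → v < p → u < v →
      ((a' u < a' v) ↔ (∃ s, s < k ∧ I s = u ∧ (∀ t, t < k → I t ≠ v) ∧ v ≤ J s) ∨
        (∃ s, s < k ∧ I s = v ∧ (∀ t, t < k → I t ≠ u) ∧ ¬ (u ≤ J s))) := by
    intro u v hu hv huv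
    constructor
    · intro hlt
      by_cases hEu : ∃ s, s < k ∧ I s = u
      · obtain ⟨s₀, hs₀, hIs₀⟩ := hEu
        have h1 : a' u = b (J s₀) := by rw [← hIs₀]; exact ha'swap s₀ hs₀
        by_cases hEv : ∃ t, t < k ∧ I t = v
        · exfalso
          obtain ⟨t₀, ht₀, hIt₀⟩ := hEv
          have hst : s₀ < t₀ := by
            rcases Nat.lt_trichotomy s₀ t₀ with h | h | h
            · exact h
            · exfalso; rw [h, hIt₀] at hIs₀; omega
            · exfalso; have := hImono t₀ s₀ h hs₀; omega
          have h2 : a' v = b (J t₀) := by rw [← hIt₀]; exact ha'swap t₀ ht₀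
          have hJst : J s₀ < J t₀ := hJmono s₀ t₀ hst ht₀
          have hb1 : b (J t₀) ≤ b (J s₀ + 1) := hbb (J t₀) (hJlt t₀ ht₀) (J s₀ + 1) (by omega)
          have hb2 : b (J s₀ + 1) ≤ a (J s₀ + 1) := hab _ (by have := hJlt t₀ ht₀; omega)
          have hb3 : a (J s₀ + 1) < b (J s₀) := hba (J s₀) (by have := hJlt t₀ ht₀; omega)
          omega
        · push_neg at hEv
          refine Or.inl ⟨s₀, hs₀, hIs₀, hEv, ?_⟩
          by_contra hc
          have h2 : a' v = a v := ha'fix v hv hEv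
          have : a v < b (J s₀) := C1 (J s₀) v (by omega) hv
          omega
      · push_neg at hEu
        have h1 : a' u = a u := ha'fix u hu hEu
        by_cases hEv : ∃ t, t < k ∧ I t = v
        · obtain ⟨t₀, ht₀, hIt₀⟩ := hEv
          refine Or.inr ⟨t₀, ht₀, hIt₀, hEu, ?_⟩
          intro hc
          have h2 : a' v = b (J t₀) := by rw [← hIt₀]; exact ha'swap t₀ ht₀
          have : b (J t₀) ≤ a u := C2 u (J t₀) hc (hJlt t₀ ht₀)
          omega
        · push_neg at hEv
          exfalso
          have h2 : a' v = a v := ha'fix v hv hEv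
          have h3 : a v ≤ a (u + 1) := haa v hv (u + 1) (by omega)
          have h4 : a (u + 1) < b u := hba u (by omega)
          have h5 : b u ≤ a u := hab u hu
          omega
    · rintro (⟨s, hs, hIs, hEv, hR⟩ | ⟨s, hs, hIs, hEu, hR⟩)
      · have h1 : a' u = b (J s) := by rw [← hIs]; exact ha'swap s hs
        have h2 : a' v = a v := ha'fix v hv hEv
        have hle : b (J s) ≤ a v := C2 v (J s) hR (hJlt s hs)
        have hne : a' u ≠ a' v := fun h => absurd (hdista u v hu hv h) (Nat.ne_of_lt huv)
        rw [h1, h2] at hne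
        omega
      · have h1 : a' u = a u := ha'fix u hu hEu
        have h2 : a' v = b (J s) := by rw [← hIs]; exact ha'swap s hs
        have : a u < b (J s) := C1 (J s) u (by omega) hu
        omega
  -- characterization of ascents of b'
  have hcharB : ∀ u v, u < p → v < p → u < v →
      ((b' u < b' v) ↔ (∃ s, s < k ∧ J s = u ∧ (∀ t, t < k → J t ≠ v) ∧ v < I s) ∨
        (∃ s, s < k ∧ J s = v ∧ (∀ t, t < k → J t ≠ u) ∧ ¬ (u < I s))) := by
    intro u v hu hv huv
    constructor
    · intro hlt
      by_cases hEu : ∃ s, s < k ∧ J s = u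
      · obtain ⟨s₀, hs₀, hJs₀⟩ := hEu
        have h1 : b' u = a (I s₀) := by rw [← hJs₀]; exact hb'swap s₀ hs₀
        by_cases hEv : ∃ t, t < k ∧ J t = v
        · exfalso
          obtain ⟨t₀, ht₀, hJt₀⟩ := hEv
          have hst : s₀ < t₀ := by
            rcases Nat.lt_trichotomy s₀ t₀ with h | h | h
            · exact h
            · exfalso; rw [h, hJt₀] at hJs₀; omega
            · exfalso; have := hJmono t₀ s₀ h hs₀; omega
          have h2 : b' v = a (I t₀) := by rw [← hJt₀]; exact hb'swap t₀ ht₀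
          have hIst : I s₀ < I t₀ := hImono s₀ t₀ hst ht₀
          have ha1 : a (I t₀) ≤ a (I s₀ + 1) := haa (I t₀) (hIlt t₀ ht₀) (I s₀ + 1) (by omega)
          have ha2 : a (I s₀ + 1) < b (I s₀) := hba (I s₀) (by have := hIlt t₀ ht₀; omega)
          have ha3 : b (I s₀) ≤ a (I s₀) := hab _ (hIlt s₀ hs₀)
          omega
        · push_neg at hEv
          refine Or.inl ⟨s₀, hs₀, hJs₀, hEv, ?_⟩
          by_contra hc
          push_neg at hc
          have h2 : b' v = b v := hb'fix v hv hEv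
          have hb1 : b v ≤ b (I s₀) := hbb v hv (I s₀) hc
          have hb2 : b (I s₀) ≤ a (I s₀) := hab _ (hIlt s₀ hs₀)
          omega
      · push_neg at hEu
        have h1 : b' u = b u := hb'fix u hu hEu
        by_cases hEv : ∃ t, t < k ∧ J t = v
        · obtain ⟨t₀, ht₀, hJt₀⟩ := hEv
          refine Or.inr ⟨t₀, ht₀, hJt₀, hEu, ?_⟩
          intro hc
          have h2 : b' v = a (I t₀) := by rw [← hJt₀]; exact hb'swap t₀ ht₀
          have : a (I t₀) < b u := C1 u (I t₀) hc (hIlt t₀ ht₀)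
          omega
        · push_neg at hEv
          exfalso
          have h2 : b' v = b v := hb'fix v hv hEv
          have h3 : b v ≤ b (u + 1) := hbb v hv (u + 1) (by omega)
          have h4 : b (u + 1) ≤ a (u + 1) := hab (u + 1) (by omega)
          have h5 : a (u + 1) < b u := hba u (by omega)
          omega
    · rintro (⟨s, hs, hJs, hEv, hR⟩ | ⟨s, hs, hJs, hEu, hR⟩)
      · have h1 : b' u = a (I s) := by rw [← hJs]; exact hb'swap s hs
        have h2 : b' v = b v := hb'fix v hv hEv
        have : a (I s) < b v := C1 v (I s) hR (hIlt s hs)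
        omega
      · push_neg at hR
        have h1 : b' u = b u := hb'fix u hu hEu
        have h2 : b' v = a (I s) := by rw [← hJs]; exact hb'swap s hs
        have ha1 : a u ≤ a (I s) := haa u hu (I s) hR
        have ha2 : b u ≤ a u := hab u hu
        have hne : b' u ≠ b' v := fun h => absurd (hdistb u v hu hv h) (Nat.ne_of_lt huv)
        rw [h1, h2] at hne
        omega
  -- apply the counting lemma to both sides
  have eqA : (∑ u ∈ Finset.range p, ∑ v ∈ Finset.range p, if u < v ∧ a' u < a' v then (1:ℕ) else 0)
      + (∑ s ∈ Finset.range k, ∑ t ∈ Finset.range k,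
          ((if I s < I t ∧ I t ≤ J s then (1:ℕ) else 0) +
           (if I t < I s ∧ ¬ (I t ≤ J s) then (1:ℕ) else 0)))
      = ∑ s ∈ Finset.range k, ∑ v ∈ Finset.range p,
          ((if I s < v ∧ v ≤ J s then (1:ℕ) else 0) +
           (if v < I s ∧ ¬ (v ≤ J s) then (1:ℕ) else 0)) :=
    asc_count p k a' I (fun s v => v ≤ J s) hIlt hImono hcharA
  have eqB : (∑ u ∈ Finset.range p, ∑ v ∈ Finset.range p, if u < v ∧ b' u < b' v then (1:ℕ) else 0)
      + (∑ s ∈ Finset.range k, ∑ t ∈ Finset.range k,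
          ((if J s < J t ∧ J t < I s then (1:ℕ) else 0) +
           (if J t < J s ∧ ¬ (J t < I s) then (1:ℕ) else 0)))
      = ∑ s ∈ Finset.range k, ∑ v ∈ Finset.range p,
          ((if J s < v ∧ v < I s then (1:ℕ) else 0) +
           (if v < J s ∧ ¬ (v < I s) then (1:ℕ) else 0)) :=
    asc_count p k b' J (fun s v => v < I s) hJlt hJmono hcharB
  -- the right-hand sides agree
  have hRHS : (∑ s ∈ Finset.range k, ∑ v ∈ Finset.range p,
        ((if I s < v ∧ v ≤ J s then (1:ℕ) else 0) +
         (if v < I s ∧ ¬ (v ≤ J s) then (1:ℕ) else 0)))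
      = ∑ s ∈ Finset.range k, ∑ v ∈ Finset.range p,
        ((if J s < v ∧ v < I s then (1:ℕ) else 0) +
         (if v < J s ∧ ¬ (v < I s) then (1:ℕ) else 0)) := by
    refine Finset.sum_congr rfl fun s hs => ?_
    rw [Finset.mem_range] at hs
    rw [Finset.sum_add_distrib, Finset.sum_add_distrib]
    have e1 : (∑ v ∈ Finset.range p, if v < I s ∧ ¬ (v ≤ J s) then (1:ℕ) else 0)
        = ∑ v ∈ Finset.range p, if J s < v ∧ v < I s then (1:ℕ) else 0 := by
      refine Finset.sum_congr rfl fun v _ => if_congr ?_ rfl rfl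
      omega
    have e2 : (∑ v ∈ Finset.range p, if v < J s ∧ ¬ (v < I s) then (1:ℕ) else 0)
        = ∑ v ∈ Finset.range p, if I s ≤ v ∧ v < J s then (1:ℕ) else 0 := by
      refine Finset.sum_congr rfl fun v _ => if_congr ?_ rfl rfl
      omega
    have e3 := ioc_ico' p (I s) (J s) (hJlt s hs)
    rw [e1, e2, e3]
    omega
  -- the correction terms agree
  have hFG' : (∑ s ∈ Finset.range k, ∑ t ∈ Finset.range k,
        ((if I s < I t ∧ I t ≤ J s then (1:ℕ) else 0) +
         (if I t < I s ∧ ¬ (I t ≤ J s) then (1:ℕ) else 0)))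
      = ∑ s ∈ Finset.range k, ∑ t ∈ Finset.range k,
        ((if J s < J t ∧ J t < I s then (1:ℕ) else 0) +
         (if J t < J s ∧ ¬ (J t < I s) then (1:ℕ) else 0)) :=
    fg_swap k I J hImono hJmono
  -- combine
  have hia := inv_add_asc p a' hdista
  have hib := inv_add_asc p b' hdistb
  omega
end

section
/- Let α, β, μ, ν be partitions with α ⊆ μ and β ⊆ ν. If (σ, τ) = (α, β)~ and (λ, ρ) = (μ, ν)~, then σ ⊆ λ and τ ⊆ ρ. -/
open scoped BigOperators

lemma conj_set_finite {f : ℕ → ℕ} (hf : IsPartition f) (t : ℕ) :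
    {i : ℕ | t < f i}.Finite := by
  obtain ⟨N, hN⟩ := hf.2
  refine (Set.finite_Iio N).subset fun i hi => ?_
  by_contra h
  have := hN i (le_of_not_gt h)
  simp only [Set.mem_setOf_eq, this] at hi
  omega

lemma conj_mono {f g : ℕ → ℕ} (hg : IsPartition g) (h : ∀ i, f i ≤ g i) (t : ℕ) :
    conj f t ≤ conj g t :=
  Nat.card_mono (conj_set_finite hg t) fun i hi => lt_of_lt_of_le hi (h i)

lemma le_conj {f : ℕ → ℕ} (hf : IsPartition f) {k t : ℕ} (h : t < f k) :
    k + 1 ≤ conj f t := by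
  have hsub : Set.Iic k ⊆ {i : ℕ | t < f i} := fun i hi =>
    lt_of_lt_of_le h (hf.1 hi)
  calc k + 1 = Nat.card (Set.Iic k) := by simp
    _ ≤ conj f t := Nat.card_mono (conj_set_finite hf t) hsub

lemma conj_le {f : ℕ → ℕ} (hf : IsPartition f) {k t : ℕ} (h : f k ≤ t) :
    conj f t ≤ k := by
  have hsub : {i : ℕ | t < f i} ⊆ Set.Iio k := by
    intro i hi
    simp only [Set.mem_setOf_eq] at hi
    by_contra hik
    exact absurd (le_trans (hf.1 (le_of_not_gt hik)) h) (not_le.mpr hi)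
  calc conj f t ≤ Nat.card (Set.Iio k) := Nat.card_mono (Set.finite_Iio k) hsub
    _ = k := by simp

lemma part_le_of_conj_le {f g : ℕ → ℕ} (hf : IsPartition f) (hg : IsPartition g)
    (h : ∀ t, conj f t ≤ conj g t) (k : ℕ) : f k ≤ g k := by
  by_contra hlt
  push_neg at hlt
  have h1 := le_conj hf hlt
  have h2 := conj_le hg (le_refl (g k))
  have := h (g k)
  omega

/-- Lemma 10: if `α ⊆ μ` and `β ⊆ ν`, and `(σ, τ) = (α, β)~`,
`(λ, ρ) = (μ, ν)~`, then `σ ⊆ λ` and `τ ⊆ ρ`. -/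
theorem stmt4 (α β μ ν σ τ l ρ : ℕ → ℕ)
    (hα : IsPartition α) (hβ : IsPartition β) (hμ : IsPartition μ) (hν : IsPartition ν)
    (hαμ : ∀ i, α i ≤ μ i) (hβν : ∀ i, β i ≤ ν i)
    (ht1 : IsTilde α β σ τ) (ht2 : IsTilde μ ν l ρ) :
    (∀ i, σ i ≤ l i) ∧ (∀ i, τ i ≤ ρ i) := by
  obtain ⟨γ, ⟨hγp, hγc⟩, hσ, hτ⟩ := ht1
  obtain ⟨δ, ⟨hδp, hδc⟩, hl, hρ⟩ := ht2
  have hcl : ∀ t, conj γ t ≤ conj δ t := fun t => by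
    rw [hγc, hδc]
    exact Nat.add_le_add (conj_mono hμ hαμ t) (conj_mono hν hβν t)
  have key : ∀ k, γ k ≤ δ k := part_le_of_conj_le hγp hδp hcl
  exact ⟨fun i => by rw [hσ, hl]; exact key _, fun i => by rw [hτ, hρ]; exact key _⟩
end

section
/- Let μ, ν be partitions and (λ, ρ) = (μ, ν)~. Then for every i ≥ 1, λ′_i = ⌈(μ′_i + ν′_i)/2⌉ and ρ′_i = ⌊(μ′_i + ν′_i)/2⌋. Moreover, (λ, ρ) is the unique pair of partitions satisfying λ′_i + ρ′_i = μ′_i + ν′_i and λ′_i − ρ′_i ∈ {0, 1} for all i ≥ 1. -/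
open scoped BigOperators

lemma aux_lower_card (s : Finset ℕ) (h : ∀ a b : ℕ, a ≤ b → b ∈ s → a ∈ s) (i : ℕ) :
    i ∈ s ↔ i < s.card := by
  constructor
  · intro hi
    have hsub : Finset.Iic i ⊆ s := fun a ha => h a i (Finset.mem_Iic.1 ha) hi
    have := Finset.card_le_card hsub
    rw [Nat.card_Iic] at this
    omega
  · intro hi
    by_contra hns
    have hsub : s ⊆ Finset.Iio i := by
      intro b hb
      simp only [Finset.mem_Iio]
      by_contra hbi
      exact hns (h i b (le_of_not_gt hbi) hb)
    have := Finset.card_le_card hsub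
    rw [Nat.card_Iio] at this
    omega

lemma aux_finite (f : ℕ → ℕ) (hf : IsPartition f) (j : ℕ) : {i : ℕ | j < f i}.Finite := by
  obtain ⟨hanti, N, hN⟩ := hf
  apply Set.Finite.subset (Set.finite_Iio N)
  intro x hx
  simp only [Set.mem_setOf_eq] at hx
  simp only [Set.mem_Iio]
  by_contra h
  rw [hN x (le_of_not_gt h)] at hx
  omega

lemma aux_conj_lt_iff (f : ℕ → ℕ) (hf : IsPartition f) (j i : ℕ) :
    j < f i ↔ i < conj f j := by
  have hfin := aux_finite f hf j
  have hcard : conj f j = hfin.toFinset.card := by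
    rw [conj, Nat.card_eq_card_finite_toFinset hfin]
  have hl : ∀ a b : ℕ, a ≤ b → b ∈ hfin.toFinset → a ∈ hfin.toFinset := by
    intro a b hab hb
    simp only [Set.Finite.mem_toFinset, Set.mem_setOf_eq] at *
    exact lt_of_lt_of_le hb (hf.1 hab)
  have := aux_lower_card hfin.toFinset hl i
  simp only [Set.Finite.mem_toFinset, Set.mem_setOf_eq] at this
  rw [this, hcard]

lemma aux_card_Iio (n : ℕ) : Nat.card (Set.Iio n) = n := by
  rw [Nat.card_eq_card_finite_toFinset (Set.finite_Iio n)]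
  simp

lemma aux_eq_of_conj (f g : ℕ → ℕ) (hf : IsPartition f) (hg : IsPartition g)
    (h : ∀ j, conj f j = conj g j) : f = g := by
  funext i
  rcases lt_trichotomy (f i) (g i) with hlt | he | hlt
  · exfalso
    have h1 : i < conj g (f i) := (aux_conj_lt_iff g hg (f i) i).1 hlt
    rw [← h] at h1
    have := (aux_conj_lt_iff f hf (f i) i).2 h1
    omega
  · exact he
  · exfalso
    have h1 : i < conj f (g i) := (aux_conj_lt_iff f hf (g i) i).1 hlt
    rw [h] at h1
    have := (aux_conj_lt_iff g hg (g i) i).2 h1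
    omega

/-- the column description of the tilde operation: if `(λ, ρ) = (μ, ν)~`
then `λ'ᵢ = ⌈(μ'ᵢ + ν'ᵢ)/2⌉` and `ρ'ᵢ = ⌊(μ'ᵢ + ν'ᵢ)/2⌋` for all `i`, and `(λ, ρ)` is
the unique pair of partitions with `λ'ᵢ + ρ'ᵢ = μ'ᵢ + ν'ᵢ` and `λ'ᵢ - ρ'ᵢ ∈ {0, 1}`
for all `i`. -/
theorem stmt5 (μ ν l ρ : ℕ → ℕ) (hμ : IsPartition μ) (hν : IsPartition ν)
    (ht : IsTilde μ ν l ρ) :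
    (∀ i, conj l i = (conj μ i + conj ν i + 1) / 2) ∧
    (∀ i, conj ρ i = (conj μ i + conj ν i) / 2) ∧
    (∀ l' ρ' : ℕ → ℕ, IsPartition l' → IsPartition ρ' →
      (∀ i, conj l' i + conj ρ' i = conj μ i + conj ν i) →
      (∀ i, conj ρ' i ≤ conj l' i ∧ conj l' i ≤ conj ρ' i + 1) →
      l' = l ∧ ρ' = ρ) := by
  obtain ⟨γ, ⟨hγp, hγc⟩, hlγ, hργ⟩ := ht
  have hlp : IsPartition l := by
    constructor
    · intro a b hab
      rw [hlγ a, hlγ b]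
      exact hγp.1 (by omega)
    · obtain ⟨N, hN⟩ := hγp.2
      exact ⟨N, fun i hi => by rw [hlγ i]; exact hN _ (by omega)⟩
  have hρp : IsPartition ρ := by
    constructor
    · intro a b hab
      rw [hργ a, hργ b]
      exact hγp.1 (by omega)
    · obtain ⟨N, hN⟩ := hγp.2
      exact ⟨N, fun i hi => by rw [hργ i]; exact hN _ (by omega)⟩
  have hconjl : ∀ j, conj l j = (conj μ j + conj ν j + 1) / 2 := by
    intro j
    have hset : {i : ℕ | j < l i} = Set.Iio ((conj γ j + 1) / 2) := by
      ext i
      simp only [Set.mem_setOf_eq, Set.mem_Iio, hlγ i,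
        aux_conj_lt_iff γ ⟨hγp.1, hγp.2⟩ j (2 * i)]
      omega
    rw [conj, hset, aux_card_Iio, hγc]
  have hconjρ : ∀ j, conj ρ j = (conj μ j + conj ν j) / 2 := by
    intro j
    have hset : {i : ℕ | j < ρ i} = Set.Iio (conj γ j / 2) := by
      ext i
      simp only [Set.mem_setOf_eq, Set.mem_Iio, hργ i,
        aux_conj_lt_iff γ ⟨hγp.1, hγp.2⟩ j (2 * i + 1)]
      omega
    rw [conj, hset, aux_card_Iio, hγc]
  refine ⟨hconjl, hconjρ, ?_⟩
  intro l' ρ' hl' hρ' hsum hdiff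
  constructor
  · apply aux_eq_of_conj l' l hl' hlp
    intro j
    rw [hconjl j]
    have h1 := hsum j
    have h2 := hdiff j
    omega
  · apply aux_eq_of_conj ρ' ρ hρ' hρp
    intro j
    rw [hconjρ j]
    have h1 := hsum j
    have h2 := hdiff j
    omega
end

section
/- Let μ/α and ν/β be skew shapes (α ⊆ μ, β ⊆ ν) that are both horizontal strips, and let (μ/α, ν/β)~ = (λ/σ, ρ/τ). Then λ/σ and ρ/τ are both horizontal strips. -/
open scoped BigOperators

lemma card_set_lt (m : ℕ) : Nat.card {i : ℕ | i < m} = m := by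
  have : {i : ℕ | i < m} = ↑(Finset.Iio m) := by ext i; simp
  rw [this, Nat.card_coe_set_eq, Set.ncard_coe_finset, Nat.card_Iio]

/-- For a partition, `t < f i ↔ i < conj f t`. -/
lemma conj_iff (f : ℕ → ℕ) (hf : IsPartition f) (t i : ℕ) :
    t < f i ↔ i < conj f t := by
  obtain ⟨ha, N, hN⟩ := hf
  set S := {i : ℕ | t < f i} with hS
  have hcne : Sᶜ.Nonempty := ⟨N, by simp [hS, hN N le_rfl]⟩
  set m := sInf Sᶜ with hm
  have hSm : S = {i : ℕ | i < m} := by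
    ext j
    constructor
    · intro hj
      by_contra h
      simp only [Set.mem_setOf_eq, not_lt] at h
      have hmS : m ∈ S := by
        have hfm : f j ≤ f m := ha h
        simp only [hS, Set.mem_setOf_eq] at hj ⊢
        omega
      exact Nat.sInf_mem hcne hmS
    · intro hj
      by_contra h
      exact Nat.notMem_of_lt_sInf hj h
  have hc : conj f t = m := by rw [conj, ← hS, hSm, card_set_lt]
  rw [hc]
  constructor
  · intro h
    have : i ∈ S := h
    rwa [hSm] at this
  · intro h
    have : i ∈ S := by rw [hSm]; exact h
    exact this

lemma conj_even (γ l : ℕ → ℕ) (hγ : IsPartition γ) (hl : ∀ i, l i = γ (2 * i)) (t : ℕ) :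
    conj l t = (conj γ t + 1) / 2 := by
  have : {i : ℕ | t < l i} = {i : ℕ | i < (conj γ t + 1) / 2} := by
    ext i
    simp only [Set.mem_setOf_eq, hl i, conj_iff γ hγ t (2 * i)]
    omega
  rw [conj, this, card_set_lt]

lemma conj_odd (γ r : ℕ → ℕ) (hγ : IsPartition γ) (hr : ∀ i, r i = γ (2 * i + 1)) (t : ℕ) :
    conj r t = conj γ t / 2 := by
  have : {i : ℕ | t < r i} = {i : ℕ | i < conj γ t / 2} := by
    ext i
    simp only [Set.mem_setOf_eq, hr i, conj_iff γ hγ t (2 * i + 1)]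
    omega
  rw [conj, this, card_set_lt]

/-- Proposition 12(i): the tilde operation preserves pairs of horizontal
strips: a skew shape `μ/α` is a horizontal strip iff `μ'ᵢ - α'ᵢ ≤ 1` for all `i`. -/
theorem stmt6 (μ α ν β l σ ρ τ : ℕ → ℕ)
    (hμ : IsPartition μ) (hα : IsPartition α) (hν : IsPartition ν) (hβ : IsPartition β)
    (hαμ : ∀ i, α i ≤ μ i) (hβν : ∀ i, β i ≤ ν i)
    (hhs1 : ∀ i, conj μ i ≤ conj α i + 1)
    (hhs2 : ∀ i, conj ν i ≤ conj β i + 1)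
    (ht1 : IsTilde μ ν l ρ) (ht2 : IsTilde α β σ τ) :
    (∀ i, conj l i ≤ conj σ i + 1) ∧ (∀ i, conj ρ i ≤ conj τ i + 1) := by
  obtain ⟨γ, ⟨hγp, hγu⟩, hlγ, hργ⟩ := ht1
  obtain ⟨δ, ⟨hδp, hδu⟩, hσδ, hτδ⟩ := ht2
  constructor
  · intro t
    rw [conj_even γ l hγp hlγ t, conj_even δ σ hδp hσδ t]
    have := hγu t; have := hδu t; have := hhs1 t; have := hhs2 t
    omega
  · intro t
    rw [conj_odd γ ρ hγp hργ t, conj_odd δ τ hδp hτδ t]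
    have := hγu t; have := hδu t; have := hhs1 t; have := hhs2 t
    omega
end

section
/- Let μ/α and ν/β be skew shapes (α ⊆ μ, β ⊆ ν) that are both weak ribbons, and let (μ/α, ν/β)~ = (λ/σ, ρ/τ). Then λ/σ and ρ/τ are both weak ribbons. -/
open scoped BigOperators

lemma conj_set_eq (γ : ℕ → ℕ) (hγ : IsPartition γ) (t : ℕ) :
    {i : ℕ | t < γ i} = Set.Iio (conj γ t) := by
  obtain ⟨hmono, N, hN⟩ := hγ
  have hne : {i : ℕ | γ i ≤ t}.Nonempty := ⟨N, by simp [hN N le_rfl]⟩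
  set m := sInf {i : ℕ | γ i ≤ t} with hm
  have hS : {i : ℕ | t < γ i} = Set.Iio m := by
    ext i
    simp only [Set.mem_setOf_eq, Set.mem_Iio]
    constructor
    · intro hi
      by_contra h
      push_neg at h
      have h1 : γ i ≤ γ m := hmono h
      have h2 : γ m ≤ t := Nat.sInf_mem hne
      omega
    · intro hi
      have : i ∉ {i : ℕ | γ i ≤ t} := Nat.notMem_of_lt_sInf hi
      simp only [Set.mem_setOf_eq, not_le] at this
      exact this
  have hc : conj γ t = m := by
    rw [conj, hS, Nat.card_eq_card_toFinset, Set.toFinset_Iio, Nat.card_Iio]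
  rw [hc, hS]

/-- Proposition 12(iii): the tilde operation preserves pairs of weak
ribbons: a skew shape `μ/α` is a weak ribbon (no 2×2 block of cells) iff
`α'ᵢ ≥ μ'_{i+1} - 1` for all `i`. -/
theorem stmt8 (μ α ν β l σ ρ τ : ℕ → ℕ)
    (hμ : IsPartition μ) (hα : IsPartition α) (hν : IsPartition ν) (hβ : IsPartition β)
    (hαμ : ∀ i, α i ≤ μ i) (hβν : ∀ i, β i ≤ ν i)
    (hwr1 : ∀ i, conj μ (i + 1) ≤ conj α i + 1)
    (hwr2 : ∀ i, conj ν (i + 1) ≤ conj β i + 1)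
    (ht1 : IsTilde μ ν l ρ) (ht2 : IsTilde α β σ τ) :
    (∀ i, conj l (i + 1) ≤ conj σ i + 1) ∧ (∀ i, conj ρ (i + 1) ≤ conj τ i + 1) := by
  obtain ⟨γ, ⟨hγp, hγc⟩, hlγ, hργ⟩ := ht1
  obtain ⟨δ, ⟨hδp, hδc⟩, hσδ, hτδ⟩ := ht2
  have key : ∀ i, conj γ (i + 1) ≤ conj δ i + 2 := fun i => by
    have := hwr1 i; have := hwr2 i; have := hγc (i + 1); have := hδc i; omega
  constructor
  · intro i
    rw [conj_even γ l hγp hlγ, conj_even δ σ hδp hσδ]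
    have := key i; omega
  · intro i
    rw [conj_odd γ ρ hγp hργ, conj_odd δ τ hδp hτδ]
    have := key i; omega
end

section
/- Let μ/α and ν/β be skew shapes (α ⊆ μ, β ⊆ ν) that are both skewed hooks, i.e. μ, α, ν, β are all nonempty hooks, and let (μ/α, ν/β)~ = (λ/σ, ρ/τ). Then λ/σ and ρ/τ are both skewed hooks. -/
open scoped BigOperators

lemma conj_lt_iff {f : ℕ → ℕ} (hf : IsPartition f) (t k : ℕ) : t < f k ↔ k < conj f t := by
  obtain ⟨hanti, N, hN⟩ := hf
  have hne : ∃ m, f m ≤ t := ⟨N, by simp [hN N le_rfl]⟩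
  have hset : {i : ℕ | t < f i} = Set.Iio (Nat.find hne) := by
    ext i
    simp only [Set.mem_setOf_eq, Set.mem_Iio]
    constructor
    · intro hi
      by_contra h
      push_neg at h
      exact absurd (le_trans (hanti h) (Nat.find_spec hne)) (not_le.mpr hi)
    · intro hi
      exact lt_of_not_ge (Nat.find_min hne hi)
  have hc : conj f t = Nat.find hne := by rw [conj, hset]; simp [Nat.card_eq_card_toFinset]
  rw [hc]
  have := Set.ext_iff.mp hset k
  simpa using this

lemma hook_of_union {μ ν γ l r : ℕ → ℕ} (hμ : IsHook μ) (hν : IsHook ν)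
    (hγ : IsUnion γ μ ν) (hl : ∀ i, l i = γ (2 * i)) (hr : ∀ i, r i = γ (2 * i + 1)) :
    IsHook l ∧ IsHook r := by
  obtain ⟨hγp, hγc⟩ := hγ
  obtain ⟨hanti, N, hN⟩ := hγp
  have hμ0 : 1 ≤ conj μ 0 := (conj_lt_iff hμ.1 0 0).mp hμ.2.1
  have hν0 : 1 ≤ conj ν 0 := (conj_lt_iff hν.1 0 0).mp hν.2.1
  have hμ1 : conj μ 1 ≤ 1 := by
    by_contra h
    push_neg at h
    exact absurd ((conj_lt_iff hμ.1 1 1).mpr h) (not_lt.mpr (hμ.2.2 1 le_rfl))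
  have hν1 : conj ν 1 ≤ 1 := by
    by_contra h
    push_neg at h
    exact absurd ((conj_lt_iff hν.1 1 1).mpr h) (not_lt.mpr (hν.2.2 1 le_rfl))
  have hγ1 : 1 ≤ γ 1 := by
    have : 1 < conj γ 0 := by rw [hγc 0]; omega
    exact (conj_lt_iff ⟨hanti, N, hN⟩ 0 1).mpr this
  have hγ0 : 1 ≤ γ 0 := le_trans hγ1 (hanti (by norm_num))
  have hγ2 : γ 2 ≤ 1 := by
    by_contra h
    push_neg at h
    have : 2 < conj γ 1 := (conj_lt_iff ⟨hanti, N, hN⟩ 1 2).mp h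
    rw [hγc 1] at this
    omega
  have hγ3 : γ 3 ≤ 1 := le_trans (hanti (by norm_num)) hγ2
  constructor
  · refine ⟨⟨fun i j hij => ?_, N, fun i hi => ?_⟩, ?_, fun i hi => ?_⟩
    · rw [hl i, hl j]
      exact hanti (by omega)
    · rw [hl i]
      exact hN _ (by omega)
    · rw [hl 0]; simpa using hγ0
    · rw [hl i]
      exact le_trans (hanti (by omega)) hγ2
  · refine ⟨⟨fun i j hij => ?_, N, fun i hi => ?_⟩, ?_, fun i hi => ?_⟩
    · rw [hr i, hr j]
      exact hanti (by omega)
    · rw [hr i]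
      exact hN _ (by omega)
    · rw [hr 0]; simpa using hγ1
    · rw [hr i]
      exact le_trans (hanti (by omega)) hγ3

/-- Proposition 12(iv): the tilde operation preserves pairs of skewed
hooks: if `μ, α, ν, β` are all nonempty hooks (with `α ⊆ μ`, `β ⊆ ν`) and
`(μ/α, ν/β)~ = (λ/σ, ρ/τ)`, then `λ, σ, ρ, τ` are all nonempty hooks. -/
theorem stmt9 (μ α ν β l σ ρ τ : ℕ → ℕ)
    (hμ : IsHook μ) (hα : IsHook α) (hν : IsHook ν) (hβ : IsHook β)
    (hαμ : ∀ i, α i ≤ μ i) (hβν : ∀ i, β i ≤ ν i)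
    (ht1 : IsTilde μ ν l ρ) (ht2 : IsTilde α β σ τ) :
    IsHook l ∧ IsHook σ ∧ IsHook ρ ∧ IsHook τ := by
  obtain ⟨γ, hγ, hl, hρ⟩ := ht1
  obtain ⟨δ, hδ, hσ, hτ⟩ := ht2
  obtain ⟨h1, h2⟩ := hook_of_union hμ hν hγ hl hρ
  obtain ⟨h3, h4⟩ := hook_of_union hα hβ hδ hσ hτ
  exact ⟨h1, h3, h2, h4⟩
end

section
/- Let μ/α and ν/β be skew shapes (α ⊆ μ, β ⊆ ν) and let (μ/α, ν/β)~ = (λ/σ, ρ/τ). Then, in dominance order, row(μ/α) ∪ row(ν/β) ⪰ row(λ/σ) ∪ row(ρ/τ). -/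
open scoped BigOperators

lemma conj_eq_card (f : ℕ → ℕ) (N : ℕ) (hN : ∀ i, N ≤ i → f i = 0) (v : ℕ) :
    conj f v = ((Finset.range N).filter fun i => v < f i).card := by
  classical
  have h : {i : ℕ | v < f i} = ↑((Finset.range N).filter fun i => v < f i) := by
    ext i
    simp only [Set.mem_setOf_eq, Finset.coe_filter, Finset.mem_range]
    constructor
    · intro hv
      refine ⟨?_, hv⟩
      by_contra hcon
      have := hN i (le_of_not_gt hcon)
      omega
    · exact fun h => h.2
  rw [conj, h]
  exact Nat.card_eq_finsetCard _

lemma lt_conj_iff {f : ℕ → ℕ} (hf : IsPartition f) (v m : ℕ) :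
    m < conj f v ↔ v < f m := by
  classical
  obtain ⟨hanti, N, hN⟩ := hf
  rw [conj_eq_card f N hN v]
  set F := (Finset.range N).filter fun i => v < f i with hF
  have hdc : ∀ i ∈ F, ∀ j, j ≤ i → j ∈ F := by
    intro i hi j hji
    simp only [hF, Finset.mem_filter, Finset.mem_range] at hi ⊢
    exact ⟨lt_of_le_of_lt hji hi.1, lt_of_lt_of_le hi.2 (hanti hji)⟩
  have hmem : m ∈ F ↔ m < F.card := by
    constructor
    · intro hm
      have hsub : Finset.range (m + 1) ⊆ F := by
        intro j hj
        simp only [Finset.mem_range] at hj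
        exact hdc m hm j (Nat.lt_succ_iff.mp hj)
      have := Finset.card_le_card hsub
      simp only [Finset.card_range] at this
      omega
    · intro hm
      by_contra hcon
      have hsub : F ⊆ Finset.range m := by
        intro i hi
        simp only [Finset.mem_range]
        by_contra h2
        exact hcon (hdc i hi m (le_of_not_gt h2))
      have := Finset.card_le_card hsub
      simp only [Finset.card_range] at this
      omega
  rw [← hmem, hF]
  simp only [Finset.mem_filter, Finset.mem_range]
  constructor
  · exact fun h => h.2
  · intro hv
    refine ⟨?_, hv⟩
    by_contra hcon
    have := hN m (le_of_not_gt hcon)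
    omega

lemma sum_tsub_eq_sum_conj (f : ℕ → ℕ) (N W t : ℕ)
    (hsup : ∀ i, N ≤ i → f i = 0) (hval : ∀ i, f i < W) :
    ∑ i ∈ Finset.range N, (f i - t) = ∑ s ∈ Finset.range W, conj f (t + s) := by
  classical
  calc ∑ i ∈ Finset.range N, (f i - t)
      = ∑ i ∈ Finset.range N, ∑ s ∈ Finset.range W,
          (if t + s < f i then 1 else 0) := by
        refine Finset.sum_congr rfl fun i _ => ?_
        rw [← Finset.card_filter]
        have hfil : (Finset.range W).filter (fun s => t + s < f i)
            = Finset.range (f i - t) := by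
          ext s
          simp only [Finset.mem_filter, Finset.mem_range]
          have := hval i
          omega
        rw [hfil, Finset.card_range]
    _ = ∑ s ∈ Finset.range W, ∑ i ∈ Finset.range N,
          (if t + s < f i then 1 else 0) := Finset.sum_comm
    _ = ∑ s ∈ Finset.range W, conj f (t + s) := by
        refine Finset.sum_congr rfl fun s _ => ?_
        rw [conj_eq_card f N hsup (t + s), Finset.card_filter]

lemma sum_range_two_mul (g : ℕ → ℕ) (N : ℕ) :
    ∑ m ∈ Finset.range (2 * N), g m
      = ∑ i ∈ Finset.range N, g (2 * i) + ∑ i ∈ Finset.range N, g (2 * i + 1) := by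
  induction N with
  | zero => simp
  | succ n ih =>
    have h2 : 2 * (n + 1) = 2 * n + 1 + 1 := by ring
    rw [h2, Finset.sum_range_succ, Finset.sum_range_succ, ih,
        Finset.sum_range_succ (fun i => g (2 * i)) n,
        Finset.sum_range_succ (fun i => g (2 * i + 1)) n]
    ring

lemma sum_skewrow_eq (γ δ : ℕ → ℕ) (hγ : IsPartition γ) (hδ : IsPartition δ)
    (N W t : ℕ) (hval : ∀ m, γ m < W) (hconj : ∀ u, conj γ u ≤ N) :
    ∑ m ∈ Finset.range N, (γ m - δ m - t)
      = ∑ v ∈ Finset.range W, (conj γ (v + t) - conj δ v) := by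
  classical
  calc ∑ m ∈ Finset.range N, (γ m - δ m - t)
      = ∑ m ∈ Finset.range N, ∑ v ∈ Finset.range W,
          (if conj δ v ≤ m ∧ m < conj γ (v + t) then 1 else 0) := by
        refine Finset.sum_congr rfl fun m _ => ?_
        rw [← Finset.card_filter]
        have hfil : (Finset.range W).filter
              (fun v => conj δ v ≤ m ∧ m < conj γ (v + t))
            = Finset.Ico (δ m) (γ m - t) := by
          ext v
          simp only [Finset.mem_filter, Finset.mem_range, Finset.mem_Ico]
          have h1 : conj δ v ≤ m ↔ δ m ≤ v := by
            rw [← not_lt, lt_conj_iff hδ, not_lt]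
          have h2 : m < conj γ (v + t) ↔ v + t < γ m := lt_conj_iff hγ _ _
          have h3 := hval m
          rw [h1, h2]
          omega
        rw [hfil, Nat.card_Ico]
        omega
    _ = ∑ v ∈ Finset.range W, ∑ m ∈ Finset.range N,
          (if conj δ v ≤ m ∧ m < conj γ (v + t) then 1 else 0) := Finset.sum_comm
    _ = ∑ v ∈ Finset.range W, (conj γ (v + t) - conj δ v) := by
        refine Finset.sum_congr rfl fun v _ => ?_
        rw [← Finset.card_filter]
        have hfil : (Finset.range N).filter
              (fun m => conj δ v ≤ m ∧ m < conj γ (v + t))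
            = Finset.Ico (conj δ v) (conj γ (v + t)) := by
          ext m
          simp only [Finset.mem_filter, Finset.mem_range, Finset.mem_Ico]
          have := hconj (v + t)
          omega
        rw [hfil, Nat.card_Ico]

lemma sum_top_eq (U : ℕ → ℕ) (hU : Antitone U) (N k : ℕ) (hk : k ≤ N) :
    k * U k + ∑ i ∈ Finset.range N, (U i - U k) = ∑ i ∈ Finset.range k, U i := by
  have hsplit : ∑ i ∈ Finset.range N, (U i - U k)
      = ∑ i ∈ Finset.range k, (U i - U k) := by
    rw [Finset.range_eq_Ico, ← Finset.sum_Ico_consecutive _ (Nat.zero_le k) hk]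
    have hz : ∑ i ∈ Finset.Ico k N, (U i - U k) = 0 := by
      refine Finset.sum_eq_zero fun i hi => ?_
      simp only [Finset.mem_Ico] at hi
      have := hU hi.1
      omega
    rw [hz, ← Finset.range_eq_Ico, add_zero]
  rw [hsplit]
  calc k * U k + ∑ i ∈ Finset.range k, (U i - U k)
      = ∑ i ∈ Finset.range k, (U k + (U i - U k)) := by
        rw [Finset.sum_add_distrib, Finset.sum_const, Finset.card_range, smul_eq_mul]
    _ = ∑ i ∈ Finset.range k, U i := by
        refine Finset.sum_congr rfl fun i hi => ?_
        simp only [Finset.mem_range] at hi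
        have := hU (le_of_lt hi)
        omega

/-- Lemma 13(i): if `(μ/α, ν/β)~ = (λ/σ, ρ/τ)` then
`row(μ/α) ∪ row(ν/β) ⪰ row(λ/σ) ∪ row(ρ/τ)` in dominance order, where `row` is the
decreasing rearrangement of the row lengths of a skew shape. -/
theorem stmt10 (μ α ν β l σ ρ τ R1 R2 R3 R4 U V : ℕ → ℕ)
    (hμ : IsPartition μ) (hα : IsPartition α) (hν : IsPartition ν) (hβ : IsPartition β)
    (hαμ : ∀ i, α i ≤ μ i) (hβν : ∀ i, β i ≤ ν i)
    (ht1 : IsTilde μ ν l ρ) (ht2 : IsTilde α β σ τ)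
    (hR1 : IsSortOf R1 (fun i => μ i - α i))
    (hR2 : IsSortOf R2 (fun i => ν i - β i))
    (hR3 : IsSortOf R3 (fun i => l i - σ i))
    (hR4 : IsSortOf R4 (fun i => ρ i - τ i))
    (hU : IsUnion U R1 R2) (hV : IsUnion V R3 R4) :
    Dominates U V := by
  obtain ⟨γ, hγU, hl, hρ⟩ := ht1
  obtain ⟨δ, hδU, hσ, hτ⟩ := ht2
  obtain ⟨hγP, hγc⟩ := hγU
  obtain ⟨hδP, hδc⟩ := hδU
  obtain ⟨Nμ, hNμ⟩ := hμ.2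
  obtain ⟨Nν, hNν⟩ := hν.2
  obtain ⟨Nγ, hNγ⟩ := hγP.2
  obtain ⟨NU, hNU⟩ := hU.1.2
  obtain ⟨NV, hNV⟩ := hV.1.2
  intro k
  set t := U k with htdef
  set N := k + Nμ + Nν + Nγ + NU + NV with hNdef
  set W := γ 0 + μ 0 + ν 0 + U 0 + V 0 + 1 with hWdef
  -- value bounds
  have hγval : ∀ m, γ m < W := fun m => by
    have := hγP.1 (Nat.zero_le m); omega
  have hμval : ∀ m, μ m < W := fun m => by
    have := hμ.1 (Nat.zero_le m); omega
  have hνval : ∀ m, ν m < W := fun m => by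
    have := hν.1 (Nat.zero_le m); omega
  have hUval : ∀ m, U m < W := fun m => by
    have := hU.1.1 (Nat.zero_le m); omega
  have hVval : ∀ m, V m < W := fun m => by
    have := hV.1.1 (Nat.zero_le m); omega
  -- conj bounds
  have hcγ : ∀ u, conj γ u ≤ 2 * N := fun u => by
    rw [conj_eq_card γ (2 * N) (fun i hi => hNγ i (by omega)) u]
    calc ((Finset.range (2 * N)).filter fun i => u < γ i).card
        ≤ (Finset.range (2 * N)).card := Finset.card_filter_le _ _
      _ = 2 * N := Finset.card_range _
  have hcμ : ∀ u, conj μ u ≤ N := fun u => by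
    rw [conj_eq_card μ N (fun i hi => hNμ i (by omega)) u]
    calc ((Finset.range N).filter fun i => u < μ i).card
        ≤ (Finset.range N).card := Finset.card_filter_le _ _
      _ = N := Finset.card_range _
  have hcν : ∀ u, conj ν u ≤ N := fun u => by
    rw [conj_eq_card ν N (fun i hi => hNν i (by omega)) u]
    calc ((Finset.range N).filter fun i => u < ν i).card
        ≤ (Finset.range N).card := Finset.card_filter_le _ _
      _ = N := Finset.card_range _
  -- Step 1 : partial sum of V bounded by t-truncation
  have A1 : ∑ i ∈ Finset.range k, V i ≤ k * t + ∑ i ∈ Finset.range N, (V i - t) := by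
    calc ∑ i ∈ Finset.range k, V i
        ≤ ∑ i ∈ Finset.range k, (t + (V i - t)) :=
          Finset.sum_le_sum fun i _ => by omega
      _ = k * t + ∑ i ∈ Finset.range k, (V i - t) := by
          rw [Finset.sum_add_distrib, Finset.sum_const, Finset.card_range, smul_eq_mul]
      _ ≤ k * t + ∑ i ∈ Finset.range N, (V i - t) := by
          refine Nat.add_le_add_left ?_ _
          refine Finset.sum_le_sum_of_subset ?_
          exact Finset.range_subset_range.mpr (by omega)
  -- Step 2 : V side as conj sums
  have A2 : ∑ i ∈ Finset.range N, (V i - t) = ∑ s ∈ Finset.range W, conj V (t + s) :=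
    sum_tsub_eq_sum_conj V N W t (fun i hi => hNV i (by omega)) hVval
  -- Step 3 : conj V = conj (l-σ) + conj (ρ-τ)
  have A3 : ∑ s ∈ Finset.range W, conj V (t + s)
      = ∑ s ∈ Finset.range W, conj (fun i => l i - σ i) (t + s)
        + ∑ s ∈ Finset.range W, conj (fun i => ρ i - τ i) (t + s) := by
    rw [← Finset.sum_add_distrib]
    refine Finset.sum_congr rfl fun s _ => ?_
    rw [hV.2 (t + s), hR3.2 (t + s), hR4.2 (t + s)]
  -- Step 4 : back to rows of l-σ and ρ-τ
  have A4 : ∑ s ∈ Finset.range W, conj (fun i => l i - σ i) (t + s)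
      = ∑ i ∈ Finset.range N, (l i - σ i - t) := by
    refine (sum_tsub_eq_sum_conj (fun i => l i - σ i) N W t ?_ ?_).symm
    · intro i hi
      have h1 : γ (2 * i) = 0 := hNγ (2 * i) (by omega)
      simp only [hl i, h1, Nat.zero_sub]
    · intro i
      have h1 := hγval (2 * i)
      have := hl i
      simp only [this]
      omega
  have A5 : ∑ s ∈ Finset.range W, conj (fun i => ρ i - τ i) (t + s)
      = ∑ i ∈ Finset.range N, (ρ i - τ i - t) := by
    refine (sum_tsub_eq_sum_conj (fun i => ρ i - τ i) N W t ?_ ?_).symm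
    · intro i hi
      have h1 : γ (2 * i + 1) = 0 := hNγ (2 * i + 1) (by omega)
      simp only [hρ i, h1, Nat.zero_sub]
    · intro i
      have h1 := hγval (2 * i + 1)
      have := hρ i
      simp only [this]
      omega
  -- Step 5 : merge even/odd rows into rows of γ-δ
  have A6 : ∑ i ∈ Finset.range N, (l i - σ i - t) + ∑ i ∈ Finset.range N, (ρ i - τ i - t)
      = ∑ m ∈ Finset.range (2 * N), (γ m - δ m - t) := by
    rw [sum_range_two_mul (fun m => γ m - δ m - t) N]
    congr 1
    · refine Finset.sum_congr rfl fun i _ => ?_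
      rw [hl i, hσ i]
    · refine Finset.sum_congr rfl fun i _ => ?_
      rw [hρ i, hτ i]
  -- Step 6 : rows of γ/δ as column counts
  have A7 : ∑ m ∈ Finset.range (2 * N), (γ m - δ m - t)
      = ∑ v ∈ Finset.range W, (conj γ (v + t) - conj δ v) :=
    sum_skewrow_eq γ δ hγP hδP (2 * N) W t hγval hcγ
  -- Step 7 : termwise column inequality
  have A8 : ∑ v ∈ Finset.range W, (conj γ (v + t) - conj δ v)
      ≤ ∑ v ∈ Finset.range W, (conj μ (v + t) - conj α v)
        + ∑ v ∈ Finset.range W, (conj ν (v + t) - conj β v) := by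
    rw [← Finset.sum_add_distrib]
    refine Finset.sum_le_sum fun v _ => ?_
    rw [hγc (v + t), hδc v]
    omega
  -- Step 8 : back to rows of μ/α and ν/β
  have A9 : ∑ v ∈ Finset.range W, (conj μ (v + t) - conj α v)
      = ∑ m ∈ Finset.range N, (μ m - α m - t) :=
    (sum_skewrow_eq μ α hμ hα N W t hμval hcμ).symm
  have A10 : ∑ v ∈ Finset.range W, (conj ν (v + t) - conj β v)
      = ∑ m ∈ Finset.range N, (ν m - β m - t) :=
    (sum_skewrow_eq ν β hν hβ N W t hνval hcν).symm
  -- Step 9 : rows of μ/α, ν/β to conj U, to U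
  have A11 : ∑ m ∈ Finset.range N, (μ m - α m - t)
      = ∑ s ∈ Finset.range W, conj (fun i => μ i - α i) (t + s) := by
    refine sum_tsub_eq_sum_conj (fun i => μ i - α i) N W t ?_ ?_
    · intro i hi
      have h1 : μ i = 0 := hNμ i (by omega)
      simp only [h1, Nat.zero_sub]
    · intro i
      show μ i - α i < W
      have := hμval i
      omega
  have A12 : ∑ m ∈ Finset.range N, (ν m - β m - t)
      = ∑ s ∈ Finset.range W, conj (fun i => ν i - β i) (t + s) := by
    refine sum_tsub_eq_sum_conj (fun i => ν i - β i) N W t ?_ ?_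
    · intro i hi
      have h1 : ν i = 0 := hNν i (by omega)
      simp only [h1, Nat.zero_sub]
    · intro i
      show ν i - β i < W
      have := hνval i
      omega
  have A13 : ∑ s ∈ Finset.range W, conj (fun i => μ i - α i) (t + s)
        + ∑ s ∈ Finset.range W, conj (fun i => ν i - β i) (t + s)
      = ∑ s ∈ Finset.range W, conj U (t + s) := by
    rw [← Finset.sum_add_distrib]
    refine Finset.sum_congr rfl fun s _ => ?_
    rw [hU.2 (t + s), hR1.2 (t + s), hR2.2 (t + s)]
  have A14 : ∑ s ∈ Finset.range W, conj U (t + s) = ∑ i ∈ Finset.range N, (U i - t) :=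
    (sum_tsub_eq_sum_conj U N W t (fun i hi => hNU i (by omega)) hUval).symm
  have A15 : k * t + ∑ i ∈ Finset.range N, (U i - t) = ∑ i ∈ Finset.range k, U i :=
    sum_top_eq U hU.1.1 N k (by omega)
  calc ∑ i ∈ Finset.range k, V i
      ≤ k * t + ∑ i ∈ Finset.range N, (V i - t) := A1
    _ = k * t + (∑ s ∈ Finset.range W, conj V (t + s)) := by rw [A2]
    _ = k * t + (∑ i ∈ Finset.range N, (l i - σ i - t)
          + ∑ i ∈ Finset.range N, (ρ i - τ i - t)) := by rw [A3, A4, A5]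
    _ = k * t + ∑ v ∈ Finset.range W, (conj γ (v + t) - conj δ v) := by rw [A6, A7]
    _ ≤ k * t + (∑ v ∈ Finset.range W, (conj μ (v + t) - conj α v)
          + ∑ v ∈ Finset.range W, (conj ν (v + t) - conj β v)) :=
        Nat.add_le_add_left A8 _
    _ = k * t + ∑ s ∈ Finset.range W, conj U (t + s) := by
        rw [A9, A10, A11, A12, A13]
    _ = k * t + ∑ i ∈ Finset.range N, (U i - t) := by rw [A14]
    _ = ∑ i ∈ Finset.range k, U i := A15
end

section
/- Let μ/α and ν/β be skew shapes (α ⊆ μ, β ⊆ ν) and let (μ/α, ν/β)~ = (λ/σ, ρ/τ). Then, in dominance order, col(μ/α) ∪ col(ν/β) ⪰ col(λ/σ) ∪ col(ρ/τ). -/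
open scoped BigOperators

/-!
Write `xⱼ, yⱼ` for the lengths of column `j` of `μ/α` and `ν/β`, and `'` for conjugation.
Column `j` of `λ/σ` and of `ρ/τ` has length `⌈(μ'ⱼ + ν'ⱼ)/2⌉ - ⌈(α'ⱼ + β'ⱼ)/2⌉` and
`⌊(μ'ⱼ + ν'ⱼ)/2⌋ - ⌊(α'ⱼ + β'ⱼ)/2⌋`: the pair `(xⱼ, yⱼ)` is replaced by a pair with the same
total and a smaller maximum. Since `U'ₜ` counts the column lengths exceeding `t`,
`∑_{t<s} U'ₜ = ∑ⱼ (min xⱼ s + min yⱼ s)`, and rebalancing a pair can only increase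
`min x s + min y s`. Hence `V' ⪰ U'`, and conjugation reverses dominance between partitions of
the same size.
-/

open Finset Filter

theorem conj_eq_of_forall_lt_iff {f : ℕ → ℕ} {t n : ℕ} (h : ∀ i, t < f i ↔ i < n) :
    conj f t = n := by
  have hset : {i : ℕ | t < f i} = Set.Iio n := Set.ext h
  rw [conj, hset]
  simp

namespace IsPartition

variable {f : ℕ → ℕ}

theorem lt_conj_iff (hf : IsPartition f) (t i : ℕ) : i < conj f t ↔ t < f i := by
  obtain ⟨hanti, N, hN⟩ := hf
  have hex : ∃ i, f i ≤ t := ⟨N, by simp [hN N le_rfl]⟩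
  have key : ∀ i, t < f i ↔ i < Nat.find hex := fun i =>
    ⟨fun hi => by_contra fun hc => (hi.trans_le (hanti (not_lt.mp hc))).not_ge (Nat.find_spec hex),
      fun hi => not_le.mp (Nat.find_min hex hi)⟩
  rw [conj_eq_of_forall_lt_iff key, key]

theorem conj_antitone (hf : IsPartition f) : Antitone (conj f) := by
  intro a b hab
  by_contra! h
  exact lt_irrefl _ ((hf.lt_conj_iff a _).mpr (hab.trans_lt ((hf.lt_conj_iff b _).mp h)))

theorem conj_eq_zero_of_le (hf : IsPartition f) {t : ℕ} (ht : f 0 ≤ t) : conj f t = 0 := by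
  by_contra h
  exact (((hf.lt_conj_iff t 0).mp (Nat.pos_of_ne_zero h)).trans_le ht).false

theorem conj_conj (hf : IsPartition f) (i : ℕ) : conj (conj f) i = f i :=
  conj_eq_of_forall_lt_iff fun t => hf.lt_conj_iff t i

theorem conj_le_conj {g : ℕ → ℕ} (hf : IsPartition f) (hgf : ∀ i, g i ≤ f i) (t : ℕ) :
    conj g t ≤ conj f t := by
  have hset : {i : ℕ | t < f i} = Set.Iio (conj f t) := Set.ext fun i => (hf.lt_conj_iff t i).symm
  refine Nat.card_mono ?_ fun i hi => lt_of_lt_of_le hi (hgf i)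
  rw [hset]
  exact Set.finite_Iio _

theorem conj_comp_two_mul (hf : IsPartition f) (t : ℕ) :
    conj (fun i => f (2 * i)) t = (conj f t + 1) / 2 :=
  conj_eq_of_forall_lt_iff fun i => by rw [← hf.lt_conj_iff]; omega

theorem conj_comp_two_mul_add_one (hf : IsPartition f) (t : ℕ) :
    conj (fun i => f (2 * i + 1)) t = conj f t / 2 :=
  conj_eq_of_forall_lt_iff fun i => by rw [← hf.lt_conj_iff]; omega

end IsPartition

namespace IsTilde

variable {μ ν l r : ℕ → ℕ}

theorem conj_left (h : IsTilde μ ν l r) (t : ℕ) : conj l t = (conj μ t + conj ν t + 1) / 2 := by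
  obtain ⟨γ, ⟨hγ, hγconj⟩, hl, -⟩ := h
  rw [show l = fun i => γ (2 * i) from funext hl, hγ.conj_comp_two_mul, hγconj]

theorem conj_right (h : IsTilde μ ν l r) (t : ℕ) : conj r t = (conj μ t + conj ν t) / 2 := by
  obtain ⟨γ, ⟨hγ, hγconj⟩, -, hr⟩ := h
  rw [show r = fun i => γ (2 * i + 1) from funext hr, hγ.conj_comp_two_mul_add_one, hγconj]

end IsTilde

theorem conj_eq_card_filter {f : ℕ → ℕ} {J : ℕ} (hf : ∀ i, J ≤ i → f i = 0) (t : ℕ) :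
    conj f t = #{i ∈ range J | t < f i} := by
  have hset : {i : ℕ | t < f i} = ↑({i ∈ range J | t < f i} : Finset ℕ) := by
    ext i
    simp only [Set.mem_ofPred_eq, coe_filter, mem_range]
    exact ⟨fun hi => ⟨not_le.mp fun hJ => by simp [hf i hJ] at hi, hi⟩, And.right⟩
  rw [conj, hset, Nat.card_coe_set_eq, Set.ncard_coe_finset]

theorem sum_range_conj {f : ℕ → ℕ} {J : ℕ} (hf : ∀ i, J ≤ i → f i = 0) (s : ℕ) :
    ∑ t ∈ range s, conj f t = ∑ i ∈ range J, min (f i) s := by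
  simp_rw [conj_eq_card_filter hf, card_filter]
  rw [sum_comm]
  refine sum_congr rfl fun i _ => ?_
  rw [← card_filter, ← card_range (min (f i) s)]
  congr 1
  ext t
  simp only [mem_filter, mem_range]
  omega

theorem IsPartition.sum_range_eq_sum_min_conj {f : ℕ → ℕ} (hf : IsPartition f) {T : ℕ}
    (hT : f 0 ≤ T) (k : ℕ) :
    ∑ i ∈ range k, f i = ∑ t ∈ range T, min (conj f t) k := by
  rw [← sum_range_conj fun t ht => hf.conj_eq_zero_of_le (hT.trans ht)]
  exact sum_congr rfl fun i _ => (hf.conj_conj i).symm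

theorem sum_range_tsub_le_of_dominates {u v : ℕ → ℕ} (hu : Antitone u) (huv : Dominates v u)
    (T k : ℕ) : ∑ t ∈ range T, (u t - k) ≤ ∑ t ∈ range T, (v t - k) := by
  obtain ⟨s, hsT, hlarge, hsmall⟩ :
      ∃ s ≤ T, (∀ t < s, k ≤ u t) ∧ ∀ t ∈ Ico s T, u t - k = 0 := by
    have hex : ∃ s, T ≤ s ∨ u s ≤ k := ⟨T, .inl le_rfl⟩
    refine ⟨Nat.find hex, Nat.find_min' hex (.inl le_rfl), fun t ht => ?_, fun t ht => ?_⟩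
    · have := not_or.mp (Nat.find_min hex ht)
      omega
    · obtain ⟨hst, htT⟩ := mem_Ico.mp ht
      have := hu hst
      rcases Nat.find_spec hex with h | h <;> omega
  have hconst : ∑ _t ∈ range s, k = s * k := by simp
  have hu_eq : ∑ t ∈ range s, (u t - k) + s * k = ∑ t ∈ range s, u t := by
    rw [← hconst, ← sum_add_distrib]
    exact sum_congr rfl fun t ht => Nat.sub_add_cancel (hlarge t (mem_range.mp ht))
  have hv_le : ∑ t ∈ range s, v t ≤ ∑ t ∈ range s, (v t - k) + s * k := by
    rw [← hconst, ← sum_add_distrib]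
    exact sum_le_sum fun t _ => le_tsub_add
  calc ∑ t ∈ range T, (u t - k) = ∑ t ∈ range s, (u t - k) := by
        rw [← sum_range_add_sum_Ico _ hsT, sum_eq_zero hsmall, add_zero]
    _ ≤ ∑ t ∈ range s, (v t - k) := by linarith [huv s]
    _ ≤ ∑ t ∈ range T, (v t - k) := sum_le_sum_of_subset (range_subset_range.mpr hsT)

theorem IsPartition.dominates_of_dominates_conj {U V : ℕ → ℕ} (hU : IsPartition U)
    (hV : IsPartition V) (h : Dominates (conj V) (conj U))
    (hsize : ∀ᶠ s in atTop, ∑ t ∈ range s, conj U t = ∑ t ∈ range s, conj V t) :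
    Dominates U V := by
  intro k
  obtain ⟨T, hT, hUT, hVT⟩ := (hsize.and ((eventually_ge_atTop (U 0)).and
    (eventually_ge_atTop (V 0)))).exists
  have htsub := sum_range_tsub_le_of_dominates hU.conj_antitone h T k
  have hsplit : ∀ W : ℕ → ℕ, ∑ t ∈ range T, (W t - k) + ∑ t ∈ range T, min (W t) k
      = ∑ t ∈ range T, W t := fun W => by
    rw [← sum_add_distrib]
    exact sum_congr rfl fun t _ => tsub_add_min
  rw [hU.sum_range_eq_sum_min_conj hUT, hV.sum_range_eq_sum_min_conj hVT]
  linarith [hsplit (conj U), hsplit (conj V)]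

theorem IsUnion.sum_range_conj {U C D x y : ℕ → ℕ} {J : ℕ} (hU : IsUnion U C D)
    (hC : IsSortOf C x) (hD : IsSortOf D y) (hx : ∀ j, J ≤ j → x j = 0)
    (hy : ∀ j, J ≤ j → y j = 0) (s : ℕ) :
    ∑ t ∈ range s, conj U t = ∑ j ∈ range J, (min (x j) s + min (y j) s) := by
  simp_rw [hU.2, hC.2, hD.2]
  rw [sum_add_distrib, sum_add_distrib, _root_.sum_range_conj hx, _root_.sum_range_conj hy]

theorem dominates_of_rebalance_columns {U V C D C' D' x y x' y' : ℕ → ℕ} {J : ℕ}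
    (hU : IsUnion U C D) (hV : IsUnion V C' D')
    (hC : IsSortOf C x) (hD : IsSortOf D y) (hC' : IsSortOf C' x') (hD' : IsSortOf D' y')
    (hx : ∀ j, J ≤ j → x j = 0) (hy : ∀ j, J ≤ j → y j = 0)
    (hsum : ∀ j, x' j + y' j = x j + y j) (hmax : ∀ j, max (x' j) (y' j) ≤ max (x j) (y j)) :
    Dominates U V := by
  have hx' : ∀ j, J ≤ j → x' j = 0 := fun j hj => by
    have := hsum j; have := hx j hj; have := hy j hj; omega
  have hy' : ∀ j, J ≤ j → y' j = 0 := fun j hj => by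
    have := hsum j; have := hx j hj; have := hy j hj; omega
  refine hU.1.dominates_of_dominates_conj hV.1 (fun s => ?_) ?_
  · rw [hU.sum_range_conj hC hD hx hy, hV.sum_range_conj hC' hD' hx' hy']
    exact sum_le_sum fun j _ => by have := hsum j; have := hmax j; omega
  · have hlarge : ∀ᶠ s in atTop, ∀ j ∈ range J, x j + y j ≤ s :=
      (eventually_all_finset _).mpr fun j _ => eventually_ge_atTop _
    filter_upwards [hlarge] with s hs
    rw [hU.sum_range_conj hC hD hx hy, hV.sum_range_conj hC' hD' hx' hy']
    exact sum_congr rfl fun j hj => by have := hsum j; have := hs j hj; omega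

theorem stmt11_general (μ α ν β l σ ρ τ C1 C2 C3 C4 U V : ℕ → ℕ)
    (hμ : IsPartition μ) (hν : IsPartition ν)
    (hαμ : ∀ i, α i ≤ μ i) (hβν : ∀ i, β i ≤ ν i)
    (ht1 : IsTilde μ ν l ρ) (ht2 : IsTilde α β σ τ)
    (hC1 : IsSortOf C1 (fun j => conj μ j - conj α j))
    (hC2 : IsSortOf C2 (fun j => conj ν j - conj β j))
    (hC3 : IsSortOf C3 (fun j => conj l j - conj σ j))
    (hC4 : IsSortOf C4 (fun j => conj ρ j - conj τ j))
    (hU : IsUnion U C1 C2) (hV : IsUnion V C3 C4) :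
    Dominates U V := by
  have hμ0 : ∀ j, max (μ 0) (ν 0) ≤ j → conj μ j = 0 := fun j hj =>
    hμ.conj_eq_zero_of_le (le_of_max_le_left hj)
  have hν0 : ∀ j, max (μ 0) (ν 0) ≤ j → conj ν j = 0 := fun j hj =>
    hν.conj_eq_zero_of_le (le_of_max_le_right hj)
  refine dominates_of_rebalance_columns (J := max (μ 0) (ν 0)) hU hV hC1 hC2 hC3 hC4
    (fun j hj => by simp [hμ0 j hj]) (fun j hj => by simp [hν0 j hj])
    (fun j => ?_) (fun j => ?_) <;>
  · have := hμ.conj_le_conj hαμ j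
    have := hν.conj_le_conj hβν j
    simp only [ht1.conj_left, ht1.conj_right, ht2.conj_left, ht2.conj_right]
    omega

/-- Lemma 13(ii): if `(μ/α, ν/β)~ = (λ/σ, ρ/τ)` then
`col(μ/α) ∪ col(ν/β) ⪰ col(λ/σ) ∪ col(ρ/τ)` in dominance order, where `col` is the
decreasing rearrangement of the column lengths of a skew shape. -/
theorem stmt11 (μ α ν β l σ ρ τ C1 C2 C3 C4 U V : ℕ → ℕ)
    (hμ : IsPartition μ) (hα : IsPartition α) (hν : IsPartition ν) (hβ : IsPartition β)
    (hαμ : ∀ i, α i ≤ μ i) (hβν : ∀ i, β i ≤ ν i)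
    (ht1 : IsTilde μ ν l ρ) (ht2 : IsTilde α β σ τ)
    (hC1 : IsSortOf C1 (fun j => conj μ j - conj α j))
    (hC2 : IsSortOf C2 (fun j => conj ν j - conj β j))
    (hC3 : IsSortOf C3 (fun j => conj l j - conj σ j))
    (hC4 : IsSortOf C4 (fun j => conj ρ j - conj τ j))
    (hU : IsUnion U C1 C2) (hV : IsUnion V C3 C4) :
    Dominates U V :=
  stmt11_general μ α ν β l σ ρ τ C1 C2 C3 C4 U V hμ hν hαμ hβν ht1 ht2 hC1 hC2 hC3 hC4 hU hV
end

section
/- Let γ = (γ₁, …, γ_ℓ) be a weakly decreasing sequence of integers and δ = (δ₁, …, δ_ℓ) a weakly increasing sequence of integers, and let ε be any permutation (rearrangement) of the sequence δ. Then sort(γ + ε) ⪰ sort(γ + δ) in dominance order, where γ + ε denotes the componentwise sum and sort(C) denotes the weakly decreasing rearrangement of the sequence C. -/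
open scoped BigOperators

/-- `s` is the weakly decreasing rearrangement of the first `L` entries of the integer
sequence `f`: `s` is weakly decreasing on positions `< L` and, for every threshold `t`,
has as many entries `> t` among its first `L` positions as `f` does. -/
def IsSortOfLenInt (L : ℕ) (s f : ℕ → ℤ) : Prop :=
  (∀ i j, i ≤ j → j < L → s j ≤ s i) ∧
  ∀ t : ℤ, ((Finset.range L).filter (fun i => t < s i)).card
      = ((Finset.range L).filter (fun i => t < f i)).card

/-!
For every `t` and `0 < k ≤ L`, `∑_{i<k} s i ≤ k t + ∑_{i<L} (s i - t)⁺`, with equality at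
`t = s (k-1)` when `s` is weakly decreasing on `[0, L)`; and the right-hand side depends only
on the multiset of the first `L` entries of `s`. So it suffices to show
`∑ (γ i + δ i - t)⁺ ≤ ∑ (γ i + δ (π i) - t)⁺` for every `t`. Since `x ↦ (x - t)⁺` is
convex, swapping two entries of `δ ∘ π` so that the smaller one meets the larger entry of
`γ` does not increase the right-hand side, and such swaps turn `π` into the identity.
-/

open Finset

lemma max_add_sub_add_max_add_sub_le {a b c d : ℤ} (t : ℤ) (hba : b ≤ a) (hcd : c ≤ d) :
    max (a + c - t) 0 + max (b + d - t) 0 ≤ max (a + d - t) 0 + max (b + c - t) 0 := by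
  simp only [max_def]
  split_ifs <;> omega

lemma sum_max_comp_swap_le {ι : Type*} [DecidableEq ι] (s : Finset ι) (x z : ι → ℤ) (t : ℤ)
    {i j : ι} (hi : i ∈ s) (hj : j ∈ s) (hx : x j ≤ x i) (hz : z j ≤ z i) :
    ∑ m ∈ s, max (x m + z (Equiv.swap i j m) - t) 0 ≤ ∑ m ∈ s, max (x m + z m - t) 0 := by
  rcases eq_or_ne i j with rfl | hij
  · simp
  have hdiff := sum_eq_add_of_mem i j hi hj hij
    (f := fun m => max (x m + z m - t) 0 - max (x m + z (Equiv.swap i j m) - t) 0)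
    (fun m _ hm => by simp [Equiv.swap_apply_of_ne_of_ne hm.1 hm.2])
  rw [sum_sub_distrib] at hdiff
  simp only [Equiv.swap_apply_left, Equiv.swap_apply_right] at hdiff
  linarith [max_add_sub_add_max_add_sub_le t hx hz]

lemma sum_max_add_le_sum_max_add_comp (x y : ℕ → ℤ) (t : ℤ) (n : ℕ)
    (hx : AntitoneOn x (Set.Iio n)) (hy : MonotoneOn y (Set.Iio n)) {σ : ℕ → ℕ}
    (hσ : Set.BijOn σ (Set.Iio n) (Set.Iio n)) :
    ∑ m ∈ range n, max (x m + y m - t) 0 ≤ ∑ m ∈ range n, max (x m + y (σ m) - t) 0 := by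
  induction n generalizing σ with
  | zero => simp
  | succ n ih =>
    have hn : n ∈ Set.Iio (n + 1) := n.lt_succ_self
    obtain ⟨i, hi, hσi⟩ := hσ.surjOn hn
    set τ : ℕ → ℕ := fun m => σ (Equiv.swap i n m)
    have hτ : Set.BijOn τ (Set.Iio (n + 1)) (Set.Iio (n + 1)) :=
      hσ.comp (Equiv.bijOn_swap hi hn)
    have hτn : τ n = n := by simp [τ, hσi]
    have hτ' : Set.BijOn τ (Set.Iio n) (Set.Iio n) := by
      have hIio : Set.Iio (n + 1) \ {n} = Set.Iio n := by ext; simp; omega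
      simpa [hτn, hIio] using hτ.sdiff_singleton hn
    calc ∑ m ∈ range (n + 1), max (x m + y m - t) 0
        ≤ ∑ m ∈ range (n + 1), max (x m + y (τ m) - t) 0 := by
          rw [sum_range_succ, sum_range_succ, hτn]
          have hsub : Set.Iio n ⊆ Set.Iio (n + 1) := Set.Iio_subset_Iio n.le_succ
          exact add_le_add_left (ih (hx.mono hsub) (hy.mono hsub) hτ') _
      _ ≤ ∑ m ∈ range (n + 1), max (x m + y (σ m) - t) 0 := by
          have hσn : σ n < n + 1 := hσ.mapsTo hn
          refine sum_max_comp_swap_le _ x (y ∘ σ) t (mem_range.mpr hi) (mem_range.mpr hn) ?_ ?_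
          · exact hx hi hn (Nat.le_of_lt_succ hi)
          · simpa [hσi] using hy hσn hn (Nat.le_of_lt_succ hσn)

lemma map_val_eq_of_card_filter_lt_eq {ι : Type*} (u : Finset ι) {f g : ι → ℤ}
    (h : ∀ t : ℤ, #(u.filter (fun i => t < f i)) = #(u.filter (fun i => t < g i))) :
    u.val.map f = u.val.map g := by
  ext v
  have hcount : ∀ e : ι → ℤ,
      Multiset.count v (u.val.map e) + #(u.filter (fun i => v < e i))
        = #(u.filter (fun i => v - 1 < e i)) := by
    intro e
    classical
    rw [Multiset.count_map, ← Finset.filter_val, Finset.card_val,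
      ← card_union_of_disjoint (disjoint_filter.mpr fun i _ h => by omega), ← filter_or]
    congr 1
    ext i
    simp only [mem_filter, and_congr_right_iff]
    intro
    omega
  have := hcount f
  rw [h, h, ← hcount g] at this
  exact Nat.add_right_cancel this

lemma sum_comp_eq_of_card_filter_lt_eq {ι : Type*} (u : Finset ι) {f g : ι → ℤ}
    (h : ∀ t : ℤ, #(u.filter (fun i => t < f i)) = #(u.filter (fun i => t < g i)))
    (φ : ℤ → ℤ) :
    ∑ i ∈ u, φ (f i) = ∑ i ∈ u, φ (g i) := by
  simpa [Multiset.map_map] using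
    congrArg (fun m => (m.map φ).sum) (map_val_eq_of_card_filter_lt_eq u h)

lemma sum_range_le_mul_add_sum_max (s : ℕ → ℤ) {k L : ℕ} (hk : k ≤ L) (t : ℤ) :
    ∑ i ∈ range k, s i ≤ k * t + ∑ i ∈ range L, max (s i - t) 0 := by
  calc ∑ i ∈ range k, s i ≤ ∑ i ∈ range k, (t + max (s i - t) 0) :=
        sum_le_sum fun i _ => by omega
    _ = k * t + ∑ i ∈ range k, max (s i - t) 0 := by simp [sum_add_distrib]
    _ ≤ k * t + ∑ i ∈ range L, max (s i - t) 0 := by gcongr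

lemma sum_range_eq_mul_add_sum_max {s : ℕ → ℤ} {k L : ℕ} (hs : AntitoneOn s (Set.Iio L))
    (hk : 0 < k) (hkL : k ≤ L) :
    ∑ i ∈ range k, s i = k * s (k - 1) + ∑ i ∈ range L, max (s i - s (k - 1)) 0 := by
  have hhead : ∀ i ∈ range k, max (s i - s (k - 1)) 0 = s i - s (k - 1) := fun i hi => by
    have := hs (mem_range.mp hi |>.trans_le hkL) (show k - 1 < L by omega)
      (show i ≤ k - 1 by have := mem_range.mp hi; omega)
    omega
  have htail : ∀ i ∈ Ico k L, max (s i - s (k - 1)) 0 = 0 := fun i hi => by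
    simp only [mem_Ico] at hi
    have := hs (show k - 1 < L by omega) hi.2 (show k - 1 ≤ i by omega)
    omega
  rw [← sum_range_add_sum_Ico _ hkL, sum_congr rfl hhead, sum_congr rfl htail]
  simp [sum_sub_distrib]

/-- Lemma 16(ii): if `γ` is weakly decreasing, `δ` is weakly increasing,
and `ε` is a rearrangement of `δ` (all of length `L`), then
`sort(γ + ε) ⪰ sort(γ + δ)` in dominance order. -/
theorem stmt17 (L : ℕ) (γ δ ε sε sδ : ℕ → ℤ) (π : ℕ → ℕ)
    (hγ : ∀ i j, i ≤ j → j < L → γ j ≤ γ i)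
    (hδ : ∀ i j, i ≤ j → j < L → δ i ≤ δ j)
    (hπ : Set.BijOn π (Set.Iio L) (Set.Iio L))
    (hε : ∀ i, i < L → ε i = δ (π i))
    (hsε : IsSortOfLenInt L sε (fun i => γ i + ε i))
    (hsδ : IsSortOfLenInt L sδ (fun i => γ i + δ i)) :
    ∀ k, k ≤ L → ∑ i ∈ Finset.range k, sδ i ≤ ∑ i ∈ Finset.range k, sε i := by
  intro k hk
  rcases Nat.eq_zero_or_pos k with rfl | hk0
  · simp
  set t := sε (k - 1)
  have hsε_anti : AntitoneOn sε (Set.Iio L) := fun i _ j hj hij => hsε.1 i j hij hj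
  calc ∑ i ∈ range k, sδ i ≤ k * t + ∑ i ∈ range L, max (sδ i - t) 0 :=
        sum_range_le_mul_add_sum_max sδ hk t
    _ = k * t + ∑ i ∈ range L, max (γ i + δ i - t) 0 := by
        rw [sum_comp_eq_of_card_filter_lt_eq _ hsδ.2 (fun x => max (x - t) 0)]
    _ ≤ k * t + ∑ i ∈ range L, max (γ i + δ (π i) - t) 0 := by
        gcongr 1
        exact sum_max_add_le_sum_max_add_comp γ δ t L (fun i _ j hj hij => hγ i j hij hj)
          (fun i _ j hj hij => hδ i j hij hj) hπ
    _ = k * t + ∑ i ∈ range L, max (sε i - t) 0 := by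
        rw [sum_comp_eq_of_card_filter_lt_eq _ hsε.2 (fun x => max (x - t) 0)]
        exact congrArg _ (sum_congr rfl fun i hi => by rw [hε i (mem_range.mp hi)])
    _ = ∑ i ∈ range k, sε i := (sum_range_eq_mul_add_sum_max hsε_anti hk0 hk).symm
end
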